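/- arXiv:1002.4687 — 8 statements merged into one kernel-verified Lean document; each statement's English description precedes it below -/
import Mathlib

section
/- The edge set of the complete graph K_k cannot be partitioned into fewer than k-1 edge-disjoint complete bipartite subgraphs (Graham–Pollak theorem). -/
/-- `crossAdj U W u v` : `u` and `v` are on opposite sides of the biclique `B(U,W)`. -/
def crossAdj {V : Type*} (U W : Set V) (u v : V) : Prop :=
  (u ∈ U ∧ v ∈ W) ∨ (u ∈ W ∧ v ∈ U)

/-- `B` is a partition of the edge set of `G` into `k` complete bipartite graphs:
every cross pair of each biclique is an edge of `G`, and every edge of `G` lies in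
exactly one of the bicliques. -/
def IsBicliquePartition {V : Type*} (G : SimpleGraph V) {k : ℕ}
    (B : Fin k → Set V × Set V) : Prop :=
  (∀ i, Disjoint (B i).1 (B i).2) ∧
  (∀ i, ∀ u v, crossAdj (B i).1 (B i).2 u v → G.Adj u v) ∧
  (∀ u v, G.Adj u v → ∃! i, crossAdj (B i).1 (B i).2 u v)

open Finset

/-- **Graham–Pollak theorem.** The edge set of the complete graph `K_k` cannot be
partitioned into fewer than `k - 1` complete bipartite graphs. -/
theorem grahamPollak (k d : ℕ) (B : Fin d → Set (Fin k) × Set (Fin k))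
    (hB : IsBicliquePartition (⊤ : SimpleGraph (Fin k)) B) :
    k - 1 ≤ d := by
  classical
  by_contra h
  push_neg at h
  have hk : d + 1 < k := by omega
  obtain ⟨hdisj, hadj, huniq⟩ := hB
  set c : Fin (d+1) → Fin k → ℝ :=
    Fin.cons (fun _ => 1) (fun i u => if u ∈ (B i).1 then 1 else 0) with hc
  set φ : (Fin k → ℝ) →ₗ[ℝ] (Fin (d+1) → ℝ) :=
    LinearMap.pi (fun j => ∑ u, c j u • LinearMap.proj u) with hφ
  have hker : ∃ x : Fin k → ℝ, x ≠ 0 ∧ φ x = 0 := by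
    have h1 : Module.finrank ℝ (Fin k → ℝ) = k := by simp
    have h2 : Module.finrank ℝ (LinearMap.range φ) ≤ d + 1 := by
      calc Module.finrank ℝ (LinearMap.range φ)
          ≤ Module.finrank ℝ (Fin (d+1) → ℝ) := Submodule.finrank_le _
        _ = d + 1 := by simp
    have h3 := LinearMap.finrank_range_add_finrank_ker φ
    rw [h1] at h3
    have h4 : 0 < Module.finrank ℝ (LinearMap.ker φ) := by omega
    rw [Module.finrank_pos_iff_exists_ne_zero] at h4
    obtain ⟨⟨x, hx⟩, hx0⟩ := h4
    refine ⟨x, ?_, hx⟩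
    intro hxz
    apply hx0
    exact Subtype.ext hxz
  obtain ⟨x, hx0, hφ0⟩ := hker
  have happ : ∀ j, φ x j = ∑ u, c j u * x u := by
    intro j
    simp [hφ, LinearMap.pi_apply, LinearMap.sum_apply]
  have hsum : ∑ u, x u = 0 := by
    have := congrFun hφ0 0
    rw [happ 0] at this
    simpa [hc, Fin.cons_zero] using this
  have hU : ∀ i, (∑ u, if u ∈ (B i).1 then x u else 0) = 0 := by
    intro i
    have := congrFun hφ0 i.succ
    rw [happ i.succ] at this
    simp only [hc, Fin.cons_succ, Pi.zero_apply] at this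
    calc (∑ u, if u ∈ (B i).1 then x u else 0)
        = ∑ u, (if u ∈ (B i).1 then (1:ℝ) else 0) * x u := by
          apply Finset.sum_congr rfl
          intro u _
          by_cases hu : u ∈ (B i).1 <;> simp [hu]
      _ = 0 := this
  -- per-biclique sum vanishes
  have hbic : ∀ i, (∑ u, ∑ v, if crossAdj (B i).1 (B i).2 u v then x u * x v else 0) = 0 := by
    intro i
    have hsplit : ∀ u v, (if crossAdj (B i).1 (B i).2 u v then x u * x v else 0)
        = (if u ∈ (B i).1 then x u else 0) * (if v ∈ (B i).2 then x v else 0)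
        + (if u ∈ (B i).2 then x u else 0) * (if v ∈ (B i).1 then x v else 0) := by
      intro u v
      have hd := Set.disjoint_left.mp (hdisj i)
      by_cases h1 : u ∈ (B i).1 <;> by_cases h2 : v ∈ (B i).2 <;>
        by_cases h3 : u ∈ (B i).2 <;> by_cases h4 : v ∈ (B i).1 <;>
        first
        | exact absurd h3 (hd h1)
        | exact absurd h2 (hd h4)
        | simp [crossAdj, h1, h2, h3, h4]
    calc (∑ u, ∑ v, if crossAdj (B i).1 (B i).2 u v then x u * x v else 0)
        = ∑ u, ∑ v, ((if u ∈ (B i).1 then x u else 0) * (if v ∈ (B i).2 then x v else 0)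
            + (if u ∈ (B i).2 then x u else 0) * (if v ∈ (B i).1 then x v else 0)) := by
          exact Finset.sum_congr rfl fun u _ => Finset.sum_congr rfl fun v _ => hsplit u v
      _ = (∑ u, if u ∈ (B i).1 then x u else 0) * (∑ v, if v ∈ (B i).2 then x v else 0)
            + (∑ u, if u ∈ (B i).2 then x u else 0) * (∑ v, if v ∈ (B i).1 then x v else 0) := by
          rw [Finset.sum_congr rfl (fun u _ => Finset.sum_add_distrib), Finset.sum_add_distrib,
            ← Finset.sum_mul_sum, ← Finset.sum_mul_sum]
      _ = 0 := by rw [hU i]; ring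
  -- total off-diagonal sum equals sum over bicliques
  have hoff : (∑ u, ∑ v, if u ≠ v then x u * x v else 0) = 0 := by
    have hstep : ∀ u v : Fin k, (if u ≠ v then x u * x v else 0)
        = ∑ i, if crossAdj (B i).1 (B i).2 u v then x u * x v else 0 := by
      intro u v
      by_cases huv : u ≠ v
      · obtain ⟨i₀, hi₀, hun⟩ := huniq u v (by simpa using huv)
        rw [if_pos huv]
        rw [Finset.sum_eq_single_of_mem i₀ (mem_univ i₀)]
        · rw [if_pos hi₀]
        · intro j _ hj
          rw [if_neg]
          intro hcj
          exact hj (hun j hcj)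
      · push_neg at huv
        subst huv
        rw [if_neg (by simp)]
        symm
        apply Finset.sum_eq_zero
        intro i _
        rw [if_neg]
        intro hci
        exact (hadj i u u hci).ne rfl
    calc (∑ u, ∑ v, if u ≠ v then x u * x v else 0)
        = ∑ u, ∑ v, ∑ i, if crossAdj (B i).1 (B i).2 u v then x u * x v else 0 :=
          Finset.sum_congr rfl fun u _ => Finset.sum_congr rfl fun v _ => hstep u v
      _ = ∑ u, ∑ i, ∑ v, if crossAdj (B i).1 (B i).2 u v then x u * x v else 0 :=
          Finset.sum_congr rfl fun u _ => Finset.sum_comm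
      _ = ∑ i, ∑ u, ∑ v, if crossAdj (B i).1 (B i).2 u v then x u * x v else 0 :=
          Finset.sum_comm
      _ = 0 := Finset.sum_eq_zero fun i _ => hbic i
  -- conclude ∑ x u ^ 2 = 0
  have hsq : (∑ u, x u ^ 2) = 0 := by
    have : (∑ u, ∑ v, if u ≠ v then x u * x v else 0) = - ∑ u, x u ^ 2 := by
      have : ∀ u : Fin k, (∑ v, if u ≠ v then x u * x v else 0)
          = x u * (∑ v, x v) - x u ^ 2 := by
        intro u
        have h1 : (∑ v, if u ≠ v then x u * x v else 0)
            = (∑ v, x u * x v) - (∑ v, if u = v then x u * x v else 0) := by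
          rw [← Finset.sum_sub_distrib]
          apply Finset.sum_congr rfl
          intro v _
          by_cases huv : u = v <;> simp [huv]
        rw [h1, Finset.sum_ite_eq, if_pos (mem_univ u), ← Finset.mul_sum]
        ring
      rw [Finset.sum_congr rfl fun u _ => this u]
      rw [Finset.sum_sub_distrib, ← Finset.sum_mul, hsum]
      ring
    rw [this] at hoff
    linarith
  apply hx0
  funext u
  have hnn : ∀ v ∈ (univ : Finset (Fin k)), (0:ℝ) ≤ x v ^ 2 := fun v _ => sq_nonneg _
  have := (Finset.sum_eq_zero_iff_of_nonneg hnn).mp hsq u (mem_univ u)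
  exact pow_eq_zero_iff (by norm_num) |>.mp this
end

section
/- If the complete graph K_k admits a t-biclique covering of size d, then k ≤ 1 + Σ_{s=1}^{t} 2^{s-1}·C(d,s). -/
/-- A `t`-biclique covering of `G` of size `k`: every edge is covered at least once and
at most `t` times by the bicliques `B i`. -/
def IsBicliqueCover {V : Type*} (t : ℕ) (G : SimpleGraph V) {k : ℕ}
    (B : Fin k → Set V × Set V) : Prop :=
  (∀ i, Disjoint (B i).1 (B i).2) ∧
  (∀ i, ∀ u v, crossAdj (B i).1 (B i).2 u v → G.Adj u v) ∧
  (∀ u v, G.Adj u v →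
    1 ≤ Nat.card {i : Fin k // crossAdj (B i).1 (B i).2 u v} ∧
    Nat.card {i : Fin k // crossAdj (B i).1 (B i).2 u v} ≤ t)

/-!
Let `m u v` count the bicliques separating `u` and `v`, and `Q = ∏_{j=1}^t (m - j)` entrywise.
The covering condition makes `Q` a nonzero multiple of the identity. Expanding the product,
`Q` is a combination of the functions `1[u ∈ S(P,N)] * 1[v ∈ S(N,P)]` with `|P| + |N| ≤ t`, where
`S(P,N)` is the set of vertices lying in `U_i` for `i ∈ P` and in `W_i` for `i ∈ N`. On such a
function the quadratic form `zᵀ · z` factors as `⟪1_{S(P,N)}, z⟫ * ⟪1_{S(N,P)}, z⟫`, so it vanishes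
on `Q` as soon as `z` is orthogonal to one vector of each pair. There are at most
`1 + ∑_{s=1}^t 2^(s-1) * C(d,s)` of these representatives; if `k` were larger, some `z ≠ 0` would
be orthogonal to all of them, contradicting `zᵀ Q z = (-1)^t t! |z|² ≠ 0`.
-/

open Finset

noncomputable section Patterns

variable {V ι : Type*} (B : ι → Set V × Set V)

def patternSet (P N : Finset ι) : Set V :=
  {u | (∀ i ∈ P, u ∈ (B i).1) ∧ ∀ i ∈ N, u ∈ (B i).2}

lemma patternSet_insert_left [DecidableEq ι] (i : ι) (P N : Finset ι) :
    patternSet B (insert i P) N = (B i).1 ∩ patternSet B P N := by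
  ext u
  simp only [patternSet, Set.mem_ofPred_eq, Set.mem_inter_iff, forall_mem_insert]
  tauto

lemma patternSet_insert_right [DecidableEq ι] (i : ι) (P N : Finset ι) :
    patternSet B P (insert i N) = (B i).2 ∩ patternSet B P N := by
  ext u
  simp only [patternSet, Set.mem_ofPred_eq, Set.mem_inter_iff, forall_mem_insert]
  tauto

lemma patternSet_eq_empty_of_not_disjoint (hB : ∀ i, Disjoint (B i).1 (B i).2)
    {P N : Finset ι} (hPN : ¬ Disjoint P N) : patternSet B P N = ∅ := by
  obtain ⟨i, hiP, hiN⟩ := not_disjoint_iff.mp hPN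
  exact Set.eq_empty_of_forall_notMem fun u hu =>
    Set.disjoint_left.mp (hB i) (hu.1 i hiP) (hu.2 i hiN)

/-- The monomials of the powers of `crossCount B`: `patternFn B P N u v = 1` iff the bicliques
in `P` put `u` in the first and `v` in the second part, and those in `N` the other way round. -/
def patternFn (P N : Finset ι) : V → V → ℝ :=
  fun u v => (patternSet B P N).indicator 1 u * (patternSet B N P).indicator 1 v

lemma patternFn_empty_empty : patternFn B ∅ ∅ = 1 := by
  ext u v
  simp [patternFn, patternSet]

-- Products in `V → V → ℝ` are entrywise, not matrix products.
def crossCount [Fintype ι] : V → V → ℝ :=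
  fun u v => ∑ i, ((B i).1.indicator 1 u * (B i).2.indicator 1 v +
    (B i).2.indicator 1 u * (B i).1.indicator 1 v)

lemma crossCount_mul_patternFn [Fintype ι] [DecidableEq ι] (P N : Finset ι) :
    crossCount B * patternFn B P N =
      ∑ i, (patternFn B (insert i P) N + patternFn B P (insert i N)) := by
  ext u v
  simp only [crossCount, patternFn, Pi.mul_apply, Finset.sum_apply, Pi.add_apply, sum_mul,
    patternSet_insert_left, patternSet_insert_right, Set.inter_indicator_one]
  exact sum_congr rfl fun i _ => by ring

def patternSpan (r : ℕ) : Submodule ℝ (V → V → ℝ) :=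
  Submodule.span ℝ {g | ∃ P N : Finset ι, #P + #N ≤ r ∧ patternFn B P N = g}

lemma patternFn_mem_patternSpan {P N : Finset ι} {r : ℕ} (h : #P + #N ≤ r) :
    patternFn B P N ∈ patternSpan B r :=
  Submodule.subset_span ⟨P, N, h, rfl⟩

lemma patternSpan_mono : Monotone (patternSpan B) := fun _ _ hrs =>
  Submodule.span_mono fun _ ⟨P, N, h, hg⟩ => ⟨P, N, h.trans hrs, hg⟩

lemma crossCount_mul_mem_patternSpan [Fintype ι] {r : ℕ} {g : V → V → ℝ}
    (hg : g ∈ patternSpan B r) : crossCount B * g ∈ patternSpan B (r + 1) := by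
  classical
  suffices patternSpan B r ≤ (patternSpan B (r + 1)).comap (LinearMap.mulLeft ℝ (crossCount B))
    from this hg
  refine Submodule.span_le.mpr ?_
  rintro _ ⟨P, N, h, rfl⟩
  simp only [SetLike.mem_coe, Submodule.mem_comap, LinearMap.mulLeft_apply,
    crossCount_mul_patternFn]
  exact sum_mem fun i _ => add_mem
    (patternFn_mem_patternSpan B (by linarith [card_insert_le i P]))
    (patternFn_mem_patternSpan B (by linarith [card_insert_le i N]))

lemma prod_crossCount_sub_mem_patternSpan [Fintype ι] (s : Finset ℕ) :
    ∏ j ∈ s, (crossCount B - (j : V → V → ℝ)) ∈ patternSpan B #s := by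
  induction s using Finset.induction_on with
  | empty =>
    rw [prod_empty, card_empty, ← patternFn_empty_empty B]
    exact patternFn_mem_patternSpan B le_rfl
  | insert j s hj ih =>
    rw [prod_insert hj, card_insert_of_notMem hj, sub_mul, ← nsmul_eq_mul]
    exact sub_mem (crossCount_mul_mem_patternSpan B ih)
      (nsmul_mem (patternSpan_mono B s.card.le_succ ih) j)

end Patterns

section HalfPatterns

variable {ι : Type*} [LinearOrder ι]

/-- One of `(P, N)`, `(N, P)` for each split of `A`: the one with `min A ∈ P`. -/
def halfPatterns (A : Finset ι) : Finset (Finset ι × Finset ι) :=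
  if h : A.Nonempty then (A.erase (A.min' h)).powerset.image fun N => (A \ N, N) else {(∅, ∅)}

lemma card_halfPatterns_le (A : Finset ι) : #(halfPatterns A) ≤ 2 ^ (#A - 1) := by
  unfold halfPatterns
  split_ifs with h
  · calc _ ≤ #(A.erase (A.min' h)).powerset := card_image_le
      _ = 2 ^ (#A - 1) := by rw [card_powerset, card_erase_of_mem (A.min'_mem h)]
  · exact Nat.one_le_two_pow

lemma mem_halfPatterns_of_min'_mem {P N : Finset ι} (hPN : Disjoint P N)
    (h : (P ∪ N).Nonempty) (hmin : (P ∪ N).min' h ∈ P) : (P, N) ∈ halfPatterns (P ∪ N) := by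
  rw [halfPatterns, dif_pos h, mem_image]
  refine ⟨N, mem_powerset.mpr fun i hi => mem_erase.mpr ⟨?_, mem_union_right P hi⟩, ?_⟩
  · rintro rfl
    exact disjoint_left.mp hPN hmin hi
  · rw [union_sdiff_right, hPN.sdiff_eq_left]

lemma mem_halfPatterns_or {P N : Finset ι} (hPN : Disjoint P N) :
    (P, N) ∈ halfPatterns (P ∪ N) ∨ (N, P) ∈ halfPatterns (N ∪ P) := by
  rcases (P ∪ N).eq_empty_or_nonempty with h | h
  · obtain ⟨rfl, rfl⟩ := union_eq_empty.mp h
    simp [halfPatterns]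
  · rcases mem_union.mp ((P ∪ N).min'_mem h) with hmin | hmin
    · exact .inl (mem_halfPatterns_of_min'_mem hPN h hmin)
    · have h' : (N ∪ P).Nonempty := union_comm P N ▸ h
      refine .inr (mem_halfPatterns_of_min'_mem hPN.symm h' ?_)
      simpa only [union_comm N P] using hmin

variable [Fintype ι]

def halfPatternsUpTo (t : ℕ) : Finset (Finset ι × Finset ι) :=
  (range (t + 1)).biUnion fun s => (powersetCard s univ).biUnion halfPatterns

lemma card_halfPatternsUpTo_le (t : ℕ) :
    #(halfPatternsUpTo (ι := ι) t) ≤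
      1 + ∑ s ∈ Icc 1 t, 2 ^ (s - 1) * (Fintype.card ι).choose s := by
  calc #(halfPatternsUpTo (ι := ι) t)
      ≤ ∑ s ∈ range (t + 1), ∑ A ∈ powersetCard s (univ : Finset ι), #(halfPatterns A) :=
        card_biUnion_le.trans (sum_le_sum fun _ _ => card_biUnion_le)
    _ ≤ ∑ s ∈ range (t + 1), ∑ A ∈ powersetCard s (univ : Finset ι), 2 ^ (s - 1) :=
        sum_le_sum fun s _ => sum_le_sum fun A hA => by
          simpa [(mem_powersetCard.mp hA).2] using card_halfPatterns_le A
    _ = 1 + ∑ s ∈ Icc 1 t, 2 ^ (s - 1) * (Fintype.card ι).choose s := by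
        simp only [sum_const, card_powersetCard, card_univ, smul_eq_mul]
        rw [range_eq_Ico, sum_eq_sum_Ico_succ_bot (by omega), zero_add,
          Ico_add_one_right_eq_Icc]
        simp [mul_comm]

lemma mem_halfPatternsUpTo_or {P N : Finset ι} {t : ℕ} (hPN : Disjoint P N)
    (h : #P + #N ≤ t) : (P, N) ∈ halfPatternsUpTo t ∨ (N, P) ∈ halfPatternsUpTo t := by
  have hmem (A : Finset ι) (hA : #A ≤ t) (p) (hp : p ∈ halfPatterns A) :
      p ∈ halfPatternsUpTo t :=
    mem_biUnion.mpr ⟨#A, mem_range.mpr (by omega),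
      mem_biUnion.mpr ⟨A, mem_powersetCard.mpr ⟨subset_univ A, rfl⟩, hp⟩⟩
  have hcard : #(P ∪ N) ≤ t := (card_union_le P N).trans h
  exact (mem_halfPatterns_or hPN).imp (hmem _ hcard _) (hmem _ (union_comm P N ▸ hcard) _)

end HalfPatterns

lemma Matrix.exists_ne_zero_forall_dotProduct_eq_zero {K V κ : Type*} [Field K] [Fintype V]
    [Fintype κ] (w : κ → V → K) (h : Fintype.card κ < Fintype.card V) :
    ∃ z ≠ 0, ∀ j, w j ⬝ᵥ z = 0 := by
  have hker : LinearMap.ker (Matrix.mulVecLin (Matrix.of w)) ≠ ⊥ :=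
    LinearMap.ker_ne_bot_of_finrank_lt (by simpa using h)
  obtain ⟨z, hz, hz0⟩ := (Submodule.ne_bot_iff _).mp hker
  exact ⟨z, hz0, fun j => congrFun hz j⟩

section QuadForm

variable {V : Type*} [Fintype V]

def quadEval (z : V → ℝ) : (V → V → ℝ) →ₗ[ℝ] ℝ where
  toFun g := ∑ u, ∑ v, z u * g u v * z v
  map_add' g h := by simp only [Pi.add_apply, mul_add, add_mul, sum_add_distrib]
  map_smul' c g := by
    simp only [Pi.smul_apply, smul_eq_mul, RingHom.id_apply, mul_sum]
    exact sum_congr rfl fun u _ => sum_congr rfl fun v _ => by ring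

lemma quadEval_apply (z : V → ℝ) (g : V → V → ℝ) :
    quadEval z g = ∑ u, ∑ v, z u * g u v * z v := rfl

lemma quadEval_diagonal [DecidableEq V] (z : V → ℝ) (c : ℝ) :
    quadEval z (fun u v => if u = v then c else 0) = c * (z ⬝ᵥ z) := by
  simp only [quadEval_apply, mul_ite, ite_mul, mul_zero, zero_mul, sum_ite_eq, mem_univ,
    if_true, dotProduct, mul_sum]
  exact sum_congr rfl fun u _ => by ring

variable {ι : Type*} (B : ι → Set V × Set V)

lemma quadEval_patternFn (z : V → ℝ) (P N : Finset ι) :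
    quadEval z (patternFn B P N) =
      ((patternSet B P N).indicator 1 ⬝ᵥ z) * ((patternSet B N P).indicator 1 ⬝ᵥ z) := by
  rw [quadEval_apply, dotProduct, dotProduct, sum_mul_sum]
  exact sum_congr rfl fun u _ => sum_congr rfl fun v _ => by simp only [patternFn]; ring

lemma quadEval_eq_zero_of_mem_patternSpan [LinearOrder ι] [Fintype ι]
    (hB : ∀ i, Disjoint (B i).1 (B i).2) {t : ℕ} {z : V → ℝ}
    (hz : ∀ p ∈ halfPatternsUpTo t, (patternSet B p.1 p.2).indicator 1 ⬝ᵥ z = 0)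
    {g : V → V → ℝ} (hg : g ∈ patternSpan B t) : quadEval z g = 0 := by
  refine (Submodule.span_le (p := LinearMap.ker (quadEval z)) |>.mpr ?_) hg
  rintro _ ⟨P, N, h, rfl⟩
  rw [SetLike.mem_coe, LinearMap.mem_ker, quadEval_patternFn]
  by_cases hPN : Disjoint P N
  · rcases mem_halfPatternsUpTo_or hPN h with hmem | hmem
    · rw [hz _ hmem, zero_mul]
    · rw [hz _ hmem, mul_zero]
  · simp [patternSet_eq_empty_of_not_disjoint B hB hPN]

end QuadForm

section Separation

variable {V ι : Type*} [Fintype ι] (B : ι → Set V × Set V)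

lemma crossCount_apply (hB : ∀ i, Disjoint (B i).1 (B i).2) (u v : V) :
    crossCount B u v = Nat.card {i // crossAdj (B i).1 (B i).2 u v} := by
  classical
  rw [Nat.card_eq_fintype_card, Fintype.card_subtype, natCast_card_filter, crossCount]
  refine sum_congr rfl fun i _ => ?_
  have := Set.disjoint_left.mp (hB i)
  by_cases hu1 : u ∈ (B i).1 <;> by_cases hu2 : u ∈ (B i).2 <;>
    by_cases hv1 : v ∈ (B i).1 <;> by_cases hv2 : v ∈ (B i).2 <;>
    simp_all [crossAdj]

lemma crossCount_self (hB : ∀ i, Disjoint (B i).1 (B i).2) (u : V) : crossCount B u u = 0 := by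
  rw [crossCount_apply B hB, Nat.cast_eq_zero, Nat.card_eq_zero]
  refine .inl ⟨fun ⟨i, hi⟩ => ?_⟩
  rcases hi with ⟨h₁, h₂⟩ | ⟨h₂, h₁⟩ <;> exact Set.disjoint_left.mp (hB i) h₁ h₂

lemma prod_crossCount_sub_eq_diagonal [DecidableEq V] (hB : ∀ i, Disjoint (B i).1 (B i).2)
    {t : ℕ} (hsep : ∀ u v, u ≠ v → Nat.card {i // crossAdj (B i).1 (B i).2 u v} ∈ Icc 1 t) :
    ∏ j ∈ Icc 1 t, (crossCount B - (j : V → V → ℝ)) =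
      fun u v => if u = v then ∏ j ∈ Icc 1 t, -(j : ℝ) else 0 := by
  ext u v
  simp only [Finset.prod_apply, Pi.sub_apply, Pi.natCast_apply]
  split_ifs with huv
  · simp [huv, crossCount_self B hB]
  · exact prod_eq_zero (hsep u v huv) (by rw [crossCount_apply B hB, sub_self])

theorem card_le_of_card_crossAdj_mem_Icc [Fintype V] [LinearOrder ι] (t : ℕ)
    (hB : ∀ i, Disjoint (B i).1 (B i).2)
    (hsep : ∀ u v, u ≠ v → Nat.card {i // crossAdj (B i).1 (B i).2 u v} ∈ Icc 1 t) :
    Fintype.card V ≤ 1 + ∑ s ∈ Icc 1 t, 2 ^ (s - 1) * (Fintype.card ι).choose s := by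
  classical
  by_contra! hV
  obtain ⟨z, hz, horth⟩ := Matrix.exists_ne_zero_forall_dotProduct_eq_zero
    (fun p : halfPatternsUpTo (ι := ι) t => (patternSet B p.1.1 p.1.2).indicator (1 : V → ℝ))
    (by simpa using (card_halfPatternsUpTo_le t).trans_lt hV)
  have hmem := prod_crossCount_sub_mem_patternSpan B (Icc 1 t)
  rw [Nat.card_Icc, Nat.add_sub_cancel] at hmem
  have hzero := quadEval_eq_zero_of_mem_patternSpan B hB (fun p hp => horth ⟨p, hp⟩) hmem
  rw [prod_crossCount_sub_eq_diagonal B hB hsep, quadEval_diagonal] at hzero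
  refine mul_ne_zero ?_ (dotProduct_self_eq_zero.not.mpr hz) hzero
  exact prod_ne_zero_iff.mpr fun j hj => neg_ne_zero.mpr
    (Nat.cast_ne_zero.mpr (Nat.one_le_iff_ne_zero.mp (mem_Icc.mp hj).1))

end Separation

/-- If the complete graph `K_k` admits a `t`-biclique covering of size `d`, then
`k ≤ 1 + ∑_{s=1}^{t} 2^{s-1} · (d choose s)`. -/
theorem card_le_of_bicliqueCover (k t d : ℕ)
    (B : Fin d → Set (Fin k) × Set (Fin k))
    (hB : IsBicliqueCover t (⊤ : SimpleGraph (Fin k)) B) :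
    k ≤ 1 + ∑ s ∈ Finset.Icc 1 t, 2 ^ (s - 1) * d.choose s := by
  obtain ⟨hdisj, -, hcover⟩ := hB
  have hsep (u v : Fin k) (huv : u ≠ v) :
      Nat.card {i // crossAdj (B i).1 (B i).2 u v} ∈ Icc 1 t :=
    mem_Icc.mpr (hcover u v huv)
  simpa using card_le_of_card_crossAdj_mem_Icc B t hdisj hsep
end

section
/- If x₁ ~ x₂ are adjacent vertices of Q₄, then the set (x₁ × Q₃⁻) ∪ (x₂ × Q₃⁻) ⊆ Q₇ can be partitioned into 2-dimensional subcubes of Q₇, where Q₃⁻ = Q₃ \ {0³, 1³}. -/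
/-- A `k`-dimensional subcube of the Boolean cube `{0,1}^n`: a set of points obtained by
fixing `n - k` coordinates to constants and letting the rest vary. -/
def IsSubcube {n : ℕ} (k : ℕ) (S : Set (Fin n → Bool)) : Prop :=
  ∃ (T : Finset (Fin n)) (a : Fin n → Bool),
    T.card = n - k ∧ S = {x | ∀ i ∈ T, x i = a i}

/-- Two vertices of the Boolean cube are adjacent iff they differ in exactly one coordinate. -/
def cubeAdj {n : ℕ} (x y : Fin n → Bool) : Prop :=
  ∃ i, x i ≠ y i ∧ ∀ j, j ≠ i → x j = y j

/-- `Q₃⁻ = Q₃ \ {0³, 1³}`. -/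
def Q3minus : Set (Fin 3 → Bool) :=
  {y | y ≠ (fun _ => false) ∧ y ≠ (fun _ => true)}

/-- Base points of the three edges partitioning `Q₃⁻`. -/
def eBase : Fin 3 → Fin 3 → Bool := ![![false,false,true], ![false,true,false], ![true,false,false]]

/-- Free coordinate of each edge. -/
def eFree : Fin 3 → Fin 3 := ![1, 0, 2]

lemma key_edges : ∀ y : Fin 3 → Bool,
    (∃ j : Fin 3, ∀ m : Fin 3, m ≠ eFree j → y m = eBase j m) ↔
      (y ≠ (fun _ => false) ∧ y ≠ (fun _ => true)) := by decide

lemma edges_disj : ∀ j j' : Fin 3, j ≠ j' → ∀ y : Fin 3 → Bool,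
    ¬((∀ m : Fin 3, m ≠ eFree j → y m = eBase j m) ∧
      (∀ m : Fin 3, m ≠ eFree j' → y m = eBase j' m)) := by decide

lemma card_T : ∀ i : Fin 4, ∀ c : Fin 3,
    (((Finset.univ.erase i).image (Fin.castAdd 3)) ∪
      ((Finset.univ.erase c).image (Fin.natAdd 4))).card = 4 + 3 - 2 := by decide

/-- If `x₁ ~ x₂` in `Q₄`, then `(x₁ × Q₃⁻) ∪ (x₂ × Q₃⁻) ⊆ Q₇` can be partitioned into
2-dimensional subcubes of `Q₇`. -/
theorem partition_of_adj_times_q3minus (x₁ x₂ : Fin 4 → Bool) (hx : cubeAdj x₁ x₂) :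
    ∃ (k : ℕ) (C : Fin k → Set (Fin (4 + 3) → Bool)),
      (∀ i, IsSubcube 2 (C i)) ∧
      (Pairwise fun i j => Disjoint (C i) (C j)) ∧
      (⋃ i, C i) = {z | ∃ y ∈ Q3minus, z = Fin.append x₁ y ∨ z = Fin.append x₂ y} := by
  obtain ⟨i, hne, hsame⟩ := hx
  refine ⟨3, fun j => {z | (∀ l : Fin 4, l ≠ i → z (Fin.castAdd 3 l) = x₁ l) ∧
      (∀ m : Fin 3, m ≠ eFree j → z (Fin.natAdd 4 m) = eBase j m)}, ?_, ?_, ?_⟩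
  · intro j
    refine ⟨((Finset.univ.erase i).image (Fin.castAdd 3)) ∪
      ((Finset.univ.erase (eFree j)).image (Fin.natAdd 4)), Fin.append x₁ (eBase j),
      card_T i (eFree j), ?_⟩
    ext z
    simp only [Set.mem_setOf_eq, Finset.mem_union, Finset.mem_image, Finset.mem_erase,
      Finset.mem_univ, and_true]
    constructor
    · rintro ⟨h1, h2⟩ t (⟨l, hl, rfl⟩ | ⟨m, hm, rfl⟩)
      · rw [Fin.append_left]; exact h1 l hl
      · rw [Fin.append_right]; exact h2 m hm
    · intro h
      refine ⟨fun l hl => ?_, fun m hm => ?_⟩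
      · have := h _ (Or.inl ⟨l, hl, rfl⟩); rwa [Fin.append_left] at this
      · have := h _ (Or.inr ⟨m, hm, rfl⟩); rwa [Fin.append_right] at this
  · intro j j' hjj'
    rw [Set.disjoint_left]
    rintro z ⟨_, h2⟩ ⟨_, h2'⟩
    exact edges_disj j j' hjj' (fun m => z (Fin.natAdd 4 m)) ⟨h2, h2'⟩
  · ext z
    simp only [Set.mem_iUnion, Set.mem_setOf_eq]
    constructor
    · rintro ⟨j, h1, h2⟩
      set y : Fin 3 → Bool := fun m => z (Fin.natAdd 4 m) with hy
      have hyQ : y ∈ Q3minus := (key_edges y).mp ⟨j, fun m hm => h2 m hm⟩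
      refine ⟨y, hyQ, ?_⟩
      by_cases hzi : z (Fin.castAdd 3 i) = x₁ i
      · left
        funext t
        refine Fin.addCases (fun l => ?_) (fun m => ?_) t
        · rw [Fin.append_left]
          by_cases hl : l = i
          · subst hl; exact hzi
          · exact h1 l hl
        · rw [Fin.append_right]
      · right
        funext t
        refine Fin.addCases (fun l => ?_) (fun m => ?_) t
        · rw [Fin.append_left]
          by_cases hl : l = i
          · subst hl
            cases hb : z (Fin.castAdd 3 l) <;> cases hb1 : x₁ l <;> cases hb2 : x₂ l <;>
              simp_all
          · rw [← hsame l hl]; exact h1 l hl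
        · rw [Fin.append_right]
    · rintro ⟨y, ⟨hy1, hy2⟩, h | h⟩
      · obtain ⟨j, hj⟩ := (key_edges y).mpr ⟨hy1, hy2⟩
        subst h
        refine ⟨j, fun l hl => ?_, fun m hm => ?_⟩
        · rw [Fin.append_left]
        · rw [Fin.append_right]; exact hj m hm
      · obtain ⟨j, hj⟩ := (key_edges y).mpr ⟨hy1, hy2⟩
        subst h
        refine ⟨j, fun l hl => ?_, fun m hm => ?_⟩
        · rw [Fin.append_left]; exact (hsame l hl).symm
        · rw [Fin.append_right]; exact hj m hm
end

section
/- The set S = Q₇ \ [(1⁴ × Q₃⁻) ∪ {0⁴ × 0³} ∪ {0⁴ × 1³}] can be partitioned into 30 pairwise disjoint 2-dimensional subcubes of Q₇. -/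
/-- `Q₃⁻ = {0,1}³ \ {0³, 1³}` does not appear directly here; `Sset` is
`S = Q₇ \ [(1⁴ × Q₃⁻) ∪ {0⁷} ∪ {0⁴ × 1³}]`, where the first four coordinates play the
role of `Q₄` and the last three of `Q₃`. -/
def Sset : Set (Fin 7 → Bool) :=
  {v | ¬ (((∀ i : Fin 7, i.val < 4 → v i = true) ∧
            ¬ (∀ i j : Fin 7, 4 ≤ i.val → 4 ≤ j.val → v i = v j))
        ∨ (∀ i, v i = false)
        ∨ ((∀ i : Fin 7, i.val < 4 → v i = false) ∧
           (∀ i : Fin 7, 4 ≤ i.val → v i = true)))}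

/-- The difference pattern `ρ(x,y) ∈ {0,1}⁷` of `x, y ∈ [n]⁷` : the `i`-th coordinate is
`true` iff `xᵢ ≠ yᵢ`. -/
def rho {n : ℕ} (x y : Fin 7 → Fin n) : Fin 7 → Bool :=
  fun i => decide (x i ≠ y i)

/-- The counterexample graph on `[n]⁷`: `x ~ y` iff `ρ(x,y) ∈ S`. -/
def Gcex (n : ℕ) : SimpleGraph (Fin 7 → Fin n) where
  Adj x y := rho x y ∈ Sset
  symm := by
    constructor
    intro x y h
    have e : rho y x = rho x y := funext fun i => by simp [rho, ne_comm]
    rwa [e]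
  loopless := by
    constructor
    intro x h
    exact h (Or.inr (Or.inl (fun i => by simp [rho])))

/-!
`S` has `128 - 8 = 120 = 30 · 4` points. We exhibit 30 squares, each written as a pattern
over `{0, 1, *}` with exactly two stars; any two of them carry opposite fixed values at some
coordinate, hence are disjoint, and their union is `S` by a finite check.
-/

open Finset

def patternCube {n : ℕ} (p : Fin n → Option Bool) : Set (Fin n → Bool) :=
  {x | ∀ i, ∀ b ∈ p i, x i = b}

instance {n : ℕ} (p : Fin n → Option Bool) : DecidablePred (· ∈ patternCube p) :=
  fun x => inferInstanceAs (Decidable (∀ i, ∀ b ∈ p i, x i = b))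

theorem isSubcube_patternCube {n : ℕ} (p : Fin n → Option Bool) :
    IsSubcube (#{i | p i = none}) (patternCube p) := by
  refine ⟨({i | p i ≠ none} : Finset (Fin n)), fun i => (p i).getD false, ?_, ?_⟩
  · have := card_filter_add_card_filter_not (s := univ) (fun i => p i = none)
    rw [card_univ, Fintype.card_fin] at this
    simp only [ne_eq]
    omega
  · ext x
    simp only [patternCube, Set.mem_ofPred_eq, mem_filter, mem_univ, true_and]
    refine forall_congr' fun i => ?_
    cases p i <;> simp

theorem disjoint_patternCube {n : ℕ} {p q : Fin n → Option Bool} {i : Fin n} {b : Bool}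
    (hp : p i = some b) (hq : q i = some !b) : Disjoint (patternCube p) (patternCube q) :=
  Set.disjoint_left.2 fun x hxp hxq => by
    simpa using (hxp i b hp).symm.trans (hxq i (!b) hq)

/-- Digit `2` marks a free coordinate. -/
def ofTrit : Fin 3 → Option Bool := ![some false, some true, none]

-- Found by computer search.
def ssetPartitionCode : Fin 30 → Fin 7 → Fin 3 :=
  ![![2, 2, 1, 1, 0, 0, 0],
    ![2, 2, 1, 1, 1, 1, 1],
    ![0, 0, 0, 1, 2, 1, 2],
    ![0, 0, 1, 0, 2, 2, 0],
    ![0, 0, 1, 0, 2, 2, 1],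
    ![0, 1, 0, 0, 2, 0, 2],
    ![0, 1, 1, 0, 2, 2, 0],
    ![0, 1, 1, 0, 2, 2, 1],
    ![1, 0, 1, 0, 2, 2, 0],
    ![1, 0, 1, 0, 2, 2, 1],
    ![1, 1, 1, 0, 2, 2, 0],
    ![1, 1, 1, 0, 2, 2, 1],
    ![2, 0, 0, 0, 0, 2, 1],
    ![2, 0, 0, 0, 1, 0, 2],
    ![2, 0, 0, 1, 2, 0, 0],
    ![2, 0, 1, 1, 1, 2, 0],
    ![2, 1, 0, 0, 2, 1, 1],
    ![2, 1, 0, 1, 2, 1, 1],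
    ![2, 1, 0, 1, 0, 2, 0],
    ![0, 2, 0, 0, 2, 1, 0],
    ![0, 2, 0, 1, 2, 0, 1],
    ![0, 2, 1, 1, 2, 0, 1],
    ![0, 2, 1, 1, 0, 1, 2],
    ![0, 1, 2, 1, 1, 2, 0],
    ![1, 2, 0, 0, 0, 2, 0],
    ![1, 0, 2, 1, 2, 0, 1],
    ![1, 0, 2, 1, 0, 1, 2],
    ![1, 0, 0, 2, 1, 1, 2],
    ![1, 1, 0, 2, 2, 0, 1],
    ![1, 1, 0, 2, 1, 2, 0]]

def ssetPattern (k : Fin 30) : Fin 7 → Option Bool :=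
  ofTrit ∘ ssetPartitionCode k

theorem card_free_ssetPattern (k : Fin 30) : #{i | ssetPattern k i = none} = 2 := by
  revert k; decide

theorem ssetPattern_clash {k l : Fin 30} (hkl : k ≠ l) :
    ∃ i b, ssetPattern k i = some b ∧ ssetPattern l i = some !b := by
  revert k l; decide

set_option maxRecDepth 4000 in
theorem exists_mem_patternCube_ssetPattern_iff (x : Fin 7 → Bool) :
    (∃ k, x ∈ patternCube (ssetPattern k)) ↔ x ∈ Sset := by
  revert x; unfold Sset; decide

/-- The set `S = Q₇ \ [(1⁴ × Q₃⁻) ∪ {0⁷} ∪ {0⁴ × 1³}]` can be partitioned into 30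
pairwise disjoint 2-dimensional subcubes of `Q₇`. -/
theorem Sset_partition_thirty_subcubes :
    ∃ C : Fin 30 → Set (Fin 7 → Bool),
      (∀ i, IsSubcube 2 (C i)) ∧
      (Pairwise fun i j => Disjoint (C i) (C j)) ∧
      (⋃ i, C i) = Sset := by
  refine ⟨fun k => patternCube (ssetPattern k), fun k => ?_, fun k l hkl => ?_, ?_⟩
  · simpa only [card_free_ssetPattern] using isSubcube_patternCube (ssetPattern k)
  · obtain ⟨i, b, hk, hl⟩ := ssetPattern_clash hkl
    exact disjoint_patternCube hk hl
  · ext x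
    simpa only [Set.mem_iUnion] using exists_mem_patternCube_ssetPattern_iff x
end

section
/- Let G be the graph on [n]⁷ with x ~ y iff ρ(x,y) ∈ S, where S = Q₇ \ [(1⁴ × Q₃⁻) ∪ {0⁷} ∪ {0⁴ × 1³}]. Then the edges of G can be partitioned into at most 30·n⁵ complete bipartite subgraphs, i.e., bp(G) ≤ 30n⁵. -/
/-!
`S` is the disjoint union of `30` squares (two-dimensional subcubes) of `Q₇`. For a square with
fixed coordinates `E`, whether `ρ(x, y)` lies in it depends only on `x|_E` and `y|_E`, so its graph
is a blow-up of a graph on `[n]^E`, `|E| = 5`. Any graph on `N` vertices is the edge-disjoint union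
of `N` stars (each vertex joined to its later neighbours in some enumeration), and stars pull back
to complete bipartite graphs under a blow-up. Summing over the squares gives `30 n⁵` bicliques.
-/

open Function

section

variable {V W : Type*}

theorem IsBicliquePartition.comap {H : SimpleGraph W} {k : ℕ} {B : Fin k → Set W × Set W}
    (hB : IsBicliquePartition H B) (p : V → W) :
    IsBicliquePartition (H.comap p) fun i => (p ⁻¹' (B i).1, p ⁻¹' (B i).2) :=
  ⟨fun i => (hB.1 i).preimage p, fun i _ _ h => hB.2.1 i _ _ h, fun _ _ h => hB.2.2 _ _ h⟩

theorem IsBicliquePartition.iSup {m k : ℕ} {H : Fin m → SimpleGraph V}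
    (hH : Pairwise (Disjoint on H)) {B : Fin m → Fin k → Set V × Set V}
    (hB : ∀ i, IsBicliquePartition (H i) (B i)) :
    IsBicliquePartition (⨆ i, H i)
      fun j => B (finProdFinEquiv.symm j).1 (finProdFinEquiv.symm j).2 := by
  refine ⟨fun j => (hB _).1 _,
    fun j u v h => SimpleGraph.iSup_adj.2 ⟨_, (hB _).2.1 _ _ _ h⟩, ?_⟩
  intro u v huv
  obtain ⟨i, hi⟩ := SimpleGraph.iSup_adj.1 huv
  obtain ⟨l, hl, hl_unique⟩ := (hB i).2.2 u v hi
  refine ⟨finProdFinEquiv (i, l), by simpa using hl, fun j hj => ?_⟩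
  obtain ⟨⟨i', l'⟩, rfl⟩ := finProdFinEquiv.surjective j
  simp only [Equiv.symm_apply_apply] at hj
  obtain rfl : i' = i := by_contra fun hne =>
    SimpleGraph.disjoint_left.1 (hH hne) u v ((hB _).2.1 _ _ _ hj) hi
  rw [hl_unique l' hj]

def starBiclique (H : SimpleGraph W) {k : ℕ} (e : Fin k ≃ W) (i : Fin k) : Set W × Set W :=
  ({e i}, {w | i < e.symm w ∧ H.Adj (e i) w})

theorem crossAdj_starBiclique_iff {H : SimpleGraph W} {k : ℕ} (e : Fin k ≃ W) {a b : Fin k}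
    (hab : H.Adj (e a) (e b)) (i : Fin k) :
    crossAdj (starBiclique H e i).1 (starBiclique H e i).2 (e a) (e b) ↔ i = min a b := by
  have hne : a ≠ b := fun h => hab.ne (congrArg e h)
  simp only [crossAdj, starBiclique, Set.mem_singleton_iff, Set.mem_ofPred_eq,
    Equiv.symm_apply_apply, e.injective.eq_iff]
  constructor
  · rintro (⟨rfl, hlt, -⟩ | ⟨⟨hlt, -⟩, rfl⟩)
    · exact (min_eq_left hlt.le).symm
    · exact (min_eq_right hlt.le).symm
  · rintro rfl
    rcases hne.lt_or_gt with hlt | hlt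
    · rw [min_eq_left hlt.le]
      exact Or.inl ⟨rfl, hlt, hab⟩
    · rw [min_eq_right hlt.le]
      exact Or.inr ⟨⟨hlt, hab.symm⟩, rfl⟩

theorem isBicliquePartition_starBiclique (H : SimpleGraph W) {k : ℕ} (e : Fin k ≃ W) :
    IsBicliquePartition H (starBiclique H e) := by
  refine ⟨fun i => Set.disjoint_singleton_left.2 fun h => (lt_irrefl i) (by simpa using h.1), ?_,
    fun u v huv => ?_⟩
  · rintro i u v (⟨rfl, -, h⟩ | ⟨⟨-, h⟩, rfl⟩)
    · exact h
    · exact h.symm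
  obtain ⟨a, rfl⟩ := e.surjective u
  obtain ⟨b, rfl⟩ := e.surjective v
  exact ⟨_, (crossAdj_starBiclique_iff e huv _).2 rfl,
    fun j hj => (crossAdj_starBiclique_iff e huv j).1 hj⟩

end

section

variable {ι κ α : Type*} [DecidableEq α]

def diffPattern (x y : ι → α) : ι → Bool := fun i => decide (x i ≠ y i)

theorem diffPattern_comm (x y : ι → α) : diffPattern x y = diffPattern y x :=
  funext fun i => by simp only [diffPattern, ne_comm]

def patternGraph (C : Set (ι → Bool)) : SimpleGraph (ι → α) where
  Adj x y := x ≠ y ∧ diffPattern x y ∈ C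
  symm := ⟨fun _ _ h => ⟨h.1.symm, diffPattern_comm (α := α) _ _ ▸ h.2⟩⟩
  loopless := ⟨fun _ h => h.1 rfl⟩

theorem patternGraph_iUnion (C : κ → Set (ι → Bool)) :
    (patternGraph (⋃ i, C i) : SimpleGraph (ι → α)) = ⨆ i, patternGraph (C i) := by
  ext x y
  simp only [patternGraph, SimpleGraph.iSup_adj, Set.mem_iUnion, exists_and_left]

theorem disjoint_patternGraph {C D : Set (ι → Bool)} (h : Disjoint C D) :
    Disjoint (patternGraph C : SimpleGraph (ι → α)) (patternGraph D) :=
  SimpleGraph.disjoint_left.2 fun _ _ hC hD => Set.disjoint_left.1 h hC.2 hD.2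

/-- A word `w ∈ {0,1,2}^ι` encodes the subcube of `{0,1}^ι` whose coordinates with `w j = 2` are
free and whose other coordinates are fixed to `w j`. -/
def subcube (w : ι → Fin 3) : Set (ι → Bool) := {v | ∀ j, w j ≠ 2 → (v j = true ↔ w j = 1)}

theorem disjoint_subcube {w w' : ι → Fin 3} {l : ι} (hw : w l ≠ 2) (hw' : w' l ≠ 2)
    (hne : w l ≠ w' l) : Disjoint (subcube w) (subcube w') := by
  refine Set.disjoint_left.2 fun v hv hv' => hne ?_
  have h := (hv l hw).symm.trans (hv' l hw')
  omega

def subcubeApex (w : ι → Fin 3) : {j // w j ≠ 2} → Bool := fun j => decide (w j = 1)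

theorem patternGraph_subcube {w : ι → Fin 3} (hw : ∃ j, w j = 1) :
    (patternGraph (subcube w) : SimpleGraph (ι → α)) =
      (patternGraph {subcubeApex w}).comap fun x j => x j := by
  ext x y
  simp only [patternGraph, SimpleGraph.comap_adj, subcube, subcubeApex, diffPattern,
    Set.mem_ofPred_eq, Set.mem_singleton_iff, funext_iff, decide_eq_decide, decide_eq_true_iff,
    Subtype.forall]
  refine and_congr_left fun hpat => ⟨fun _ hxy => ?_, fun h hxy => h (hxy ▸ rfl)⟩
  obtain ⟨j, hj⟩ := hw
  exact (hpat j (by simp [hj])).2 hj (congrFun hxy ⟨j, by simp [hj]⟩)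

end

/-- The first four coordinates form `Q₄`, the last three `Q₃`. Each fibre `{a} × Q₃` with
`a ∈ {0001, 0010, 0100, 0101, 0110, 1001, 1101}` is split into two squares; each of
`{0000, 1000}, {0111, 0011}, {1011, 1010}, {1100, 1110}` times the `6`-cycle `Q₃⁻` into three;
the remaining squares are `**11 × {000, 111}` and `1**0 × {000, 111}`. -/
def squares : Fin 30 → Fin 7 → Fin 3 :=
  ![![0, 0, 0, 1, 0, 2, 2], ![0, 0, 0, 1, 1, 2, 2],
    ![0, 0, 1, 0, 0, 2, 2], ![0, 0, 1, 0, 1, 2, 2],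
    ![0, 1, 0, 0, 0, 2, 2], ![0, 1, 0, 0, 1, 2, 2],
    ![0, 1, 0, 1, 0, 2, 2], ![0, 1, 0, 1, 1, 2, 2],
    ![0, 1, 1, 0, 0, 2, 2], ![0, 1, 1, 0, 1, 2, 2],
    ![1, 0, 0, 1, 0, 2, 2], ![1, 0, 0, 1, 1, 2, 2],
    ![1, 1, 0, 1, 0, 2, 2], ![1, 1, 0, 1, 1, 2, 2],
    ![2, 0, 0, 0, 0, 2, 1], ![2, 0, 0, 0, 2, 1, 0], ![2, 0, 0, 0, 1, 0, 2],
    ![0, 2, 1, 1, 0, 2, 1], ![0, 2, 1, 1, 2, 1, 0], ![0, 2, 1, 1, 1, 0, 2],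
    ![1, 0, 1, 2, 0, 2, 1], ![1, 0, 1, 2, 2, 1, 0], ![1, 0, 1, 2, 1, 0, 2],
    ![1, 1, 2, 0, 0, 2, 1], ![1, 1, 2, 0, 2, 1, 0], ![1, 1, 2, 0, 1, 0, 2],
    ![2, 2, 1, 1, 0, 0, 0], ![2, 2, 1, 1, 1, 1, 1],
    ![1, 2, 2, 0, 0, 0, 0], ![1, 2, 2, 0, 1, 1, 1]]

set_option maxRecDepth 10000 in
theorem Sset_eq_iUnion_squares : Sset = ⋃ i, subcube (squares i) := by
  ext v
  simp only [Sset, subcube, Set.mem_ofPred_eq, Set.mem_iUnion]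
  revert v
  decide

theorem pairwise_disjoint_squares : Pairwise (Disjoint on fun i => subcube (squares i)) := by
  have key : ∀ i j : Fin 30, i ≠ j →
      ∃ l, squares i l ≠ 2 ∧ squares j l ≠ 2 ∧ squares i l ≠ squares j l := by
    decide
  intro i j hij
  obtain ⟨l, hi, hj, hne⟩ := key i j hij
  exact disjoint_subcube hi hj hne

theorem card_fixed_squares (i : Fin 30) : Fintype.card {j // squares i j ≠ 2} = 5 := by
  revert i; decide

theorem exists_one_squares (i : Fin 30) : ∃ j, squares i j = 1 := by
  revert i; decide

theorem Gcex_eq_patternGraph (n : ℕ) : Gcex n = patternGraph Sset := by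
  ext x y
  refine ⟨fun h => ⟨fun hxy => ?_, h⟩, And.right⟩
  subst hxy
  exact (Gcex n).loopless.irrefl x h

/-- The edges of the counterexample graph `G` on `[n]⁷` can be partitioned into at most
`30 · n⁵` complete bipartite subgraphs, i.e. `bp(G) ≤ 30n⁵`. -/
theorem bp_Gcex_le (n : ℕ) :
    ∃ k ≤ 30 * n ^ 5, ∃ B : Fin k → Set (Fin 7 → Fin n) × Set (Fin 7 → Fin n),
      IsBicliquePartition (Gcex n) B := by
  have hG : Gcex n = ⨆ i, patternGraph (subcube (squares i)) := by
    rw [Gcex_eq_patternGraph, Sset_eq_iUnion_squares, patternGraph_iUnion]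
  have enum (i : Fin 30) : Fin (n ^ 5) ≃ ({j // squares i j ≠ 2} → Fin n) :=
    (Fintype.equivFinOfCardEq (by rw [Fintype.card_fun, Fintype.card_fin, card_fixed_squares])).symm
  have hB (i : Fin 30) : IsBicliquePartition (patternGraph (subcube (squares i))) _ :=
    patternGraph_subcube (α := Fin n) (exists_one_squares i) ▸
      (isBicliquePartition_starBiclique _ (enum i)).comap _
  exact ⟨_, le_rfl, _, hG ▸ IsBicliquePartition.iSup
    (fun i j hij => disjoint_patternGraph (pairwise_disjoint_squares hij)) hB⟩
end

section
/- There exist a constant c > 0 and an infinite family of graphs G such that χ(G) ≥ c·bp(G)^{6/5}, disproving the Alon–Saks–Seymour conjecture that χ(G) ≤ bp(G) + 1. -/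
/-- The biclique partition number `bp(G)`: the minimum number of complete bipartite
graphs needed to partition the edge set of `G`. -/
noncomputable def bp {V : Type*} (G : SimpleGraph V) : ℕ :=
  sInf {k | ∃ B : Fin k → Set V × Set V, IsBicliquePartition G B}

/-!
Write `ρ(x, y) ∈ {0,1}⁷` for the pattern of coordinates where `x, y ∈ X⁷` differ, with `q = |X|`.
The set of edge patterns is a disjoint union of 22 subcubes with at most five fixed coordinates.
Orienting each subcube along one coordinate fixed to `1`, its edges split into products of
per-coordinate rectangles `{t} × {t}`, `{t} × (t, ∞)`, `(t, ∞) × {t}` and `X × X`, so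
`bp ≤ 22 · (2q)⁵`. Every non-edge `x ≠ y` either agrees on the first four coordinates and
differs on the last three, or differs on the first four and agrees somewhere on the last three;
this forces independent sets to have size at most `3q`, so `χ ≥ q⁶ / 3`. Since a partition into
`k` bicliques yields a proper `3ᵏ`-colouring, `bp ≥ log₃ χ` grows with `q`, and
`χ ≥ q⁶ / 3 ≳ bp^{6/5}`.
-/

open Finset

theorem crossAdj_comm {V : Type*} {U W : Set V} {u v : V} : crossAdj U W u v ↔ crossAdj U W v u :=
  Or.comm.trans (or_congr And.comm And.comm)

section Bicliques

variable {V : Type*} {G : SimpleGraph V}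

theorem IsBicliquePartition.bp_le {k : ℕ} {B : Fin k → Set V × Set V}
    (hB : IsBicliquePartition G B) : bp G ≤ k :=
  Nat.sInf_le ⟨B, hB⟩

theorem exists_isBicliquePartition_bp {k : ℕ} {B : Fin k → Set V × Set V}
    (hB : IsBicliquePartition G B) : ∃ B' : Fin (bp G) → Set V × Set V, IsBicliquePartition G B' :=
  Nat.sInf_mem (s := {k | ∃ B : Fin k → Set V × Set V, IsBicliquePartition G B}) ⟨k, B, hB⟩

theorem IsBicliquePartition.colorable {k : ℕ} {B : Fin k → Set V × Set V}
    (hB : IsBicliquePartition G B) : G.Colorable (3 ^ k) := by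
  classical
  let C : G.Coloring (Fin k → Fin 3) := SimpleGraph.Coloring.mk
    (fun v i => if v ∈ (B i).1 then 0 else if v ∈ (B i).2 then 1 else 2) fun {u v} huv heq => by
      obtain ⟨i, hi, -⟩ := hB.2.2 u v huv
      have hdisj := Set.disjoint_left.1 (hB.1 i)
      have hi' := congrFun heq i
      rcases hi with ⟨hu, hv⟩ | ⟨hu, hv⟩
      · have hv' : v ∉ (B i).1 := fun h => hdisj h hv
        simp [hu, hv, hv'] at hi'
      · have hu' : u ∉ (B i).1 := fun h => hdisj h hu
        simp [hu, hv, hu'] at hi'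
  simpa using C.colorable

end Bicliques

theorem SimpleGraph.Colorable.card_le_mul {V : Type*} [Fintype V] {G : SimpleGraph V} {k a : ℕ}
    (hG : G.Colorable k) (hα : ∀ s : Finset V, G.IsIndepSet s → #s ≤ a) :
    Fintype.card V ≤ k * a := by
  classical
  obtain ⟨C⟩ := hG
  calc Fintype.card V = #(univ : Finset V) := card_univ.symm
    _ ≤ a * #(univ.image C) := card_le_mul_card_image _ a fun c _ => hα _ fun x hx y hy _ =>
        C.not_adj_of_mem_colorClass (mem_filter.1 (mem_coe.1 hx)).2 (mem_filter.1 (mem_coe.1 hy)).2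
    _ ≤ a * k := Nat.mul_le_mul_left a (by simpa using card_le_univ (univ.image C))
    _ = k * a := Nat.mul_comm a k

namespace AlonSaksSeymour

structure IsRectPartition {α β κ : Type*} (r : α → β → Prop) (B : κ → Set α × Set β) : Prop where
  rel_of_mem : ∀ k, ∀ a ∈ (B k).1, ∀ b ∈ (B k).2, r a b
  existsUnique : ∀ a b, r a b → ∃! k, a ∈ (B k).1 ∧ b ∈ (B k).2

namespace IsRectPartition

variable {α β κ : Type*} {r : α → β → Prop} {B : κ → Set α × Set β}

theorem comp_equiv {κ' : Type*} (h : IsRectPartition r B) (e : κ' ≃ κ) :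
    IsRectPartition r (B ∘ e) where
  rel_of_mem k := h.rel_of_mem (e k)
  existsUnique a b hab := (e.existsUnique_congr_right (q := fun k => a ∈ (B k).1 ∧ b ∈ (B k).2)).2
    (h.existsUnique a b hab)

theorem pi {ι : Type*} {α β κ : ι → Type*} {r : ∀ i, α i → β i → Prop}
    {B : ∀ i, κ i → Set (α i) × Set (β i)} (h : ∀ i, IsRectPartition (r i) (B i)) :
    IsRectPartition (fun (x : ∀ i, α i) (y : ∀ i, β i) => ∀ i, r i (x i) (y i))
      (fun k : ∀ i, κ i => ({x | ∀ i, x i ∈ (B i (k i)).1}, {y | ∀ i, y i ∈ (B i (k i)).2})) where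
  rel_of_mem k x hx y hy i := (h i).rel_of_mem (k i) _ (hx i) _ (hy i)
  existsUnique x y hxy := by
    choose k hk huniq using fun i => (h i).existsUnique _ _ (hxy i)
    exact ⟨k, ⟨fun i => (hk i).1, fun i => (hk i).2⟩,
      fun k' hk' => funext fun i => huniq i (k' i) ⟨hk'.1 i, hk'.2 i⟩⟩

theorem sigma {ι : Type*} {κ : ι → Type*} {r : ι → α → β → Prop} {B : ∀ i, κ i → Set α × Set β}
    (h : ∀ i, IsRectPartition (r i) (B i)) (hr : ∀ i j a b, r i a b → r j a b → i = j) :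
    IsRectPartition (fun a b => ∃ i, r i a b) (fun k : Σ i, κ i => B k.1 k.2) where
  rel_of_mem k a ha b hb := ⟨k.1, (h k.1).rel_of_mem k.2 a ha b hb⟩
  existsUnique a b := by
    rintro ⟨i, hi⟩
    obtain ⟨k, hk, huniq⟩ := (h i).existsUnique a b hi
    refine ⟨⟨i, k⟩, hk, ?_⟩
    rintro ⟨j, k'⟩ hk'
    obtain rfl := hr _ _ _ _ ((h j).rel_of_mem k' a hk'.1 b hk'.2) hi
    rw [huniq k' hk']

end IsRectPartition

section BaseRelations

variable {α : Type*}

theorem isRectPartition_true : IsRectPartition (fun _ _ : α => True)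
    fun _ : PUnit => ((Set.univ : Set α), (Set.univ : Set α)) :=
  ⟨fun _ _ _ _ _ => trivial, fun _ _ _ => ⟨PUnit.unit, ⟨trivial, trivial⟩, fun _ _ => rfl⟩⟩

theorem isRectPartition_eq : IsRectPartition (· = ·) fun t : α => (({t} : Set α), ({t} : Set α)) :=
  ⟨fun _ _ ha _ hb => ha.trans hb.symm, fun a _ hab => ⟨a, ⟨rfl, hab.symm⟩, fun _ h => h.1.symm⟩⟩

theorem isRectPartition_lt [Preorder α] :
    IsRectPartition (· < ·) fun t : α => (({t} : Set α), Set.Ioi t) :=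
  ⟨fun _ _ ha _ hb => ha ▸ hb, fun a _ hab => ⟨a, ⟨rfl, hab⟩, fun _ h => h.1.symm⟩⟩

theorem isRectPartition_ne [LinearOrder α] :
    IsRectPartition (· ≠ ·) fun k : Bool × α =>
      if k.1 then (Set.Ioi k.2, ({k.2} : Set α)) else (({k.2} : Set α), Set.Ioi k.2) where
  rel_of_mem := by
    rintro ⟨_ | _, t⟩ a ha b hb <;> simp only [Bool.false_eq_true, if_false, if_true] at ha hb
    · exact ha ▸ (ne_of_lt hb)
    · exact hb ▸ (ne_of_gt ha)
  existsUnique a b hab := by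
    rcases hab.lt_or_gt with h | h
    · refine ⟨(false, a), ⟨rfl, h⟩, ?_⟩
      rintro ⟨_ | _, t⟩ ⟨ha, hb⟩ <;> simp only [Bool.false_eq_true, if_false, if_true] at ha hb
      · rw [ha]
      · exact absurd (hb ▸ h) (lt_asymm ha)
    · refine ⟨(true, b), ⟨h, rfl⟩, ?_⟩
      rintro ⟨_ | _, t⟩ ⟨ha, hb⟩ <;> simp only [Bool.false_eq_true, if_false, if_true] at ha hb
      · exact absurd (ha ▸ h) (lt_asymm hb)
      · rw [hb]

end BaseRelations

section Bicliques

variable {V : Type*} {G : SimpleGraph V}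

theorem isBicliquePartition_of_isRectPartition {r : V → V → Prop}
    (hadj : ∀ x y, G.Adj x y ↔ r x y ∨ r y x) (hr : ∀ x y, r x y → ¬ r y x) {k : ℕ}
    {B : Fin k → Set V × Set V} (hB : IsRectPartition r B) : IsBicliquePartition G B := by
  have hcross : ∀ u v, r u v → ∃! i, crossAdj (B i).1 (B i).2 u v := by
    intro u v huv
    obtain ⟨i, hi, huniq⟩ := hB.existsUnique u v huv
    refine ⟨i, Or.inl hi, fun j hj => hj.elim (huniq j) fun hj => ?_⟩
    exact absurd (hB.rel_of_mem j v hj.2 u hj.1) (hr u v huv)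
  refine ⟨fun i => Set.disjoint_left.2 fun x hx hx' => hr x x ?_ ?_, ?_, ?_⟩
  · exact hB.rel_of_mem i x hx x hx'
  · exact hB.rel_of_mem i x hx x hx'
  · rintro i u v (⟨hu, hv⟩ | ⟨hu, hv⟩)
    · exact (hadj u v).2 (Or.inl (hB.rel_of_mem i u hu v hv))
    · exact (hadj u v).2 (Or.inr (hB.rel_of_mem i v hv u hu))
  · intro u v huv
    rcases (hadj u v).1 huv with h | h
    · exact hcross u v h
    · simpa only [crossAdj_comm] using hcross v u h

theorem exists_isBicliquePartition_of_isRectPartition {r : V → V → Prop}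
    (hadj : ∀ x y, G.Adj x y ↔ r x y ∨ r y x) (hr : ∀ x y, r x y → ¬ r y x)
    {κ : Type*} [Fintype κ] {B : κ → Set V × Set V} (hB : IsRectPartition r B) :
    ∃ B' : Fin (Fintype.card κ) → Set V × Set V, IsBicliquePartition G B' :=
  ⟨_, isBicliquePartition_of_isRectPartition hadj hr (hB.comp_equiv (Fintype.equivFin κ).symm)⟩

end Bicliques

/-- One coordinate of an oriented subcube of `{0,1}ⁿ`: free, fixed to `0` (`eq`), fixed to `1`
(`ne`), or fixed to `1` and oriented as `x i < y i` (`lt`). -/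
inductive CoordCond
  | free | eq | ne | lt
  deriving DecidableEq

namespace CoordCond

variable {X : Type*}

def allows : CoordCond → Bool → Bool
  | free, _ => true
  | eq, b => !b
  | ne, b => b
  | lt, b => b

def Holds [LinearOrder X] : CoordCond → X → X → Prop
  | free, _, _ => True
  | eq, a, b => a = b
  | ne, a, b => a ≠ b
  | lt, a, b => a < b

def Index (X : Type*) : CoordCond → Type _
  | free => PUnit
  | eq => X
  | ne => Bool × X
  | lt => X

instance [Fintype X] : ∀ k : CoordCond, Fintype (k.Index X)
  | free => inferInstanceAs (Fintype PUnit)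
  | eq => inferInstanceAs (Fintype X)
  | ne => inferInstanceAs (Fintype (Bool × X))
  | lt => inferInstanceAs (Fintype X)

def rect [LinearOrder X] : (k : CoordCond) → k.Index X → Set X × Set X
  | free, _ => (Set.univ, Set.univ)
  | eq, t => ({t}, {t})
  | ne, k => if k.1 then (Set.Ioi k.2, {k.2}) else ({k.2}, Set.Ioi k.2)
  | lt, t => ({t}, Set.Ioi t)

theorem isRectPartition_rect [LinearOrder X] :
    ∀ k : CoordCond, IsRectPartition k.Holds (k.rect (X := X))
  | free => isRectPartition_true
  | eq => isRectPartition_eq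
  | ne => isRectPartition_ne
  | lt => isRectPartition_lt

theorem card_index_le [Fintype X] [Nonempty X] (k : CoordCond) :
    Fintype.card (k.Index X) ≤ (2 * Fintype.card X) ^ (if k = free then 0 else 1) := by
  have := Fintype.card_pos (α := X)
  cases k
  · exact (Fintype.card_punit).trans_le (by simp)
  · change Fintype.card X ≤ _
    simp only [reduceCtorEq, if_false, pow_one]
    omega
  · change Fintype.card (Bool × X) ≤ _
    simp
  · change Fintype.card X ≤ _
    simp only [reduceCtorEq, if_false, pow_one]
    omega

theorem holds_iff_allows [LinearOrder X] {k : CoordCond} (hk : k ≠ lt) (a b : X) :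
    k.Holds a b ↔ k.allows (decide (a ≠ b)) := by
  cases k <;> simp_all [Holds, allows]

theorem holds_comm [LinearOrder X] {k : CoordCond} (hk : k ≠ lt) (a b : X) :
    k.Holds a b ↔ k.Holds b a := by
  cases k <;> simp_all [Holds, eq_comm]

theorem holds_or_holds_iff_allows [LinearOrder X] (k : CoordCond) (a b : X) :
    k.Holds a b ∨ k.Holds b a ↔ k.allows (decide (a ≠ b)) := by
  cases k <;> simp [Holds, allows, @eq_comm _ b a]

end CoordCond

open CoordCond

variable {ι X : Type*}

def pattern [DecidableEq X] (x y : ι → X) : ι → Bool := fun i => decide (x i ≠ y i)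

theorem pattern_comm [DecidableEq X] (x y : ι → X) : pattern x y = pattern y x :=
  funext fun _ => decide_eq_decide.2 ne_comm

def InCube (c : ι → CoordCond) (ρ : ι → Bool) : Prop := ∀ i, (c i).allows (ρ i)

def OrientedRel [LinearOrder X] (c : ι → CoordCond) (x y : ι → X) : Prop :=
  ∀ i, (c i).Holds (x i) (y i)

theorem orientedRel_or_orientedRel_iff [LinearOrder X] {c : ι → CoordCond} {i₀ : ι}
    (hc : ∀ i, c i = lt ↔ i = i₀) (x y : ι → X) :
    OrientedRel c x y ∨ OrientedRel c y x ↔ InCube c (pattern x y) := by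
  constructor
  · rintro (h | h) i
    · exact (holds_or_holds_iff_allows _ _ _).1 (Or.inl (h i))
    · exact (holds_or_holds_iff_allows _ _ _).1 (Or.inr (h i))
  · intro h
    rcases (holds_or_holds_iff_allows _ _ _).2 (h i₀) with h₀ | h₀
    · refine Or.inl fun i => ?_
      rcases eq_or_ne i i₀ with rfl | hi
      · exact h₀
      · exact (holds_iff_allows (mt (hc i).1 hi) _ _).2 (h i)
    · refine Or.inr fun i => ?_
      rcases eq_or_ne i i₀ with rfl | hi
      · exact h₀
      · rw [holds_comm (mt (hc i).1 hi)]
        exact (holds_iff_allows (mt (hc i).1 hi) _ _).2 (h i)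

theorem OrientedRel.not_swap [LinearOrder X] {c : ι → CoordCond} {i₀ : ι} (hc : c i₀ = lt)
    {x y : ι → X} (h : OrientedRel c x y) : ¬ OrientedRel c y x := fun h' => by
  have h₁ := h i₀
  have h₂ := h' i₀
  rw [hc] at h₁ h₂
  exact lt_asymm h₁ h₂

theorem OrientedRel.inCube [LinearOrder X] {c : ι → CoordCond} {x y : ι → X}
    (h : OrientedRel c x y) : InCube c (pattern x y) := fun i =>
  (holds_or_holds_iff_allows _ _ _).1 (Or.inl (h i))

theorem isRectPartition_orientedRel [LinearOrder X] (c : ι → CoordCond) :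
    IsRectPartition (OrientedRel (X := X) c)
      fun k : ∀ i, (c i).Index X => ({x | ∀ i, x i ∈ ((c i).rect (k i)).1},
        {y | ∀ i, y i ∈ ((c i).rect (k i)).2}) :=
  IsRectPartition.pi fun i => isRectPartition_rect (c i)

theorem card_index_pi_le [Fintype ι] [DecidableEq ι] [Fintype X] [Nonempty X] (c : ι → CoordCond) :
    Fintype.card (∀ i, (c i).Index X) ≤ (2 * Fintype.card X) ^ #{i | c i ≠ free} := by
  rw [Fintype.card_pi]
  calc ∏ i, Fintype.card ((c i).Index X)
      ≤ ∏ i, (2 * Fintype.card X) ^ (if c i = free then 0 else 1) :=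
        prod_le_prod' fun i _ => card_index_le (c i)
    _ = (2 * Fintype.card X) ^ #{i | c i ≠ free} := by
        rw [prod_pow_eq_pow_sum]
        congr 1
        simp [sum_ite, filter_not]

/-- The non-edge patterns: `(1⁴ × (Q₃ \ {0³, 1³})) ∪ {0⁷} ∪ {0⁴ × 1³}`. This is the paper's
excluded set minus `1⁴0³`: the paper's `S` has one more pattern of odd weight than of even weight,
so unlike `S ∪ {1⁴0³}` it is not a disjoint union of subcubes of positive dimension. -/
def IsExcluded (ρ : Fin 7 → Bool) : Prop :=
  ((∀ i : Fin 7, i < 4 → ρ i) ∧ (∃ i : Fin 7, 4 ≤ i ∧ ρ i) ∧ ∃ i : Fin 7, 4 ≤ i ∧ !ρ i) ∨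
    (∀ i, ρ i = false) ∨ ∀ i, ρ i = decide (4 ≤ i)

instance : DecidablePred IsExcluded := fun ρ => by unfold IsExcluded; infer_instance

def graph (X : Type*) [DecidableEq X] : SimpleGraph (Fin 7 → X) where
  Adj x y := ¬ IsExcluded (pattern x y)
  symm := ⟨fun x y h => pattern_comm x y ▸ h⟩
  loopless := ⟨fun x h => h (Or.inr (Or.inl fun i => by simp [pattern]))⟩

def cubes : Fin 22 → Fin 7 → CoordCond :=
  ![![lt, free, free, free, ne, ne, ne],
    ![free, free, lt, free, eq, eq, eq],
    ![free, free, free, eq, lt, free, eq],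
    ![free, eq, free, lt, ne, free, eq],
    ![free, lt, eq, ne, free, free, eq],
    ![eq, lt, ne, ne, ne, free, free],
    ![free, lt, eq, eq, eq, free, free],
    ![eq, lt, free, eq, ne, free, ne],
    ![lt, free, eq, free, ne, eq, ne],
    ![lt, free, ne, eq, free, eq, ne],
    ![free, eq, lt, ne, free, eq, ne],
    ![eq, lt, ne, free, eq, free, ne],
    ![lt, free, ne, eq, eq, ne, free],
    ![eq, free, lt, free, eq, ne, eq],
    ![lt, eq, free, ne, eq, ne, free],
    ![free, lt, eq, ne, eq, free, ne],
    ![eq, free, eq, lt, ne, free, ne],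
    ![eq, eq, free, eq, free, eq, lt],
    ![eq, eq, lt, free, free, ne, ne],
    ![eq, eq, eq, lt, eq, free, free],
    ![lt, eq, eq, free, eq, eq, free],
    ![free, eq, eq, eq, eq, lt, free]]

instance (c : Fin 7 → CoordCond) : DecidablePred (InCube c) := fun ρ => by
  unfold InCube; infer_instance

set_option maxRecDepth 10000 in
theorem not_isExcluded_iff_exists_inCube (ρ : Fin 7 → Bool) :
    ¬ IsExcluded ρ ↔ ∃ m, InCube (cubes m) ρ := by
  revert ρ; decide

set_option maxRecDepth 10000 in
theorem eq_of_inCube_cubes {ρ : Fin 7 → Bool} {m m' : Fin 22} (h : InCube (cubes m) ρ)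
    (h' : InCube (cubes m') ρ) : m = m' := by
  revert ρ m m'; decide

theorem exists_cubes_eq_lt_iff (m : Fin 22) : ∃ i₀, ∀ i, cubes m i = lt ↔ i = i₀ := by
  revert m; decide

theorem card_cubes_ne_free_le (m : Fin 22) : #{i | cubes m i ≠ free} ≤ 5 := by
  revert m; decide

section Bicliques

variable [LinearOrder X]

def graphOrientation (x y : Fin 7 → X) : Prop := ∃ m, OrientedRel (cubes m) x y

theorem graph_adj_iff (x y : Fin 7 → X) :
    (graph X).Adj x y ↔ graphOrientation x y ∨ graphOrientation y x := by
  simp only [graph, not_isExcluded_iff_exists_inCube, graphOrientation, ← exists_or]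
  refine exists_congr fun m => ?_
  obtain ⟨i₀, hi₀⟩ := exists_cubes_eq_lt_iff m
  exact (orientedRel_or_orientedRel_iff hi₀ x y).symm

theorem graphOrientation_asymm {x y : Fin 7 → X} (h : graphOrientation x y) :
    ¬ graphOrientation y x := by
  rintro ⟨m', h'⟩
  obtain ⟨m, h⟩ := h
  obtain rfl := eq_of_inCube_cubes h.inCube (pattern_comm x y ▸ h'.inCube)
  obtain ⟨i₀, hi₀⟩ := exists_cubes_eq_lt_iff m
  exact h.not_swap ((hi₀ i₀).2 rfl) h'

theorem exists_isBicliquePartition_graph [Fintype X] [Nonempty X] :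
    ∃ k ≤ 22 * (2 * Fintype.card X) ^ 5, ∃ B : Fin k → Set (Fin 7 → X) × Set (Fin 7 → X),
      IsBicliquePartition (graph X) B := by
  have hB := IsRectPartition.sigma (fun m => isRectPartition_orientedRel (X := X) (cubes m))
    fun m m' x y h h' => eq_of_inCube_cubes h.inCube h'.inCube
  refine ⟨_, ?_, exists_isBicliquePartition_of_isRectPartition graph_adj_iff
    (fun x y => graphOrientation_asymm) hB⟩
  calc Fintype.card (Σ m, ∀ i, (cubes m i).Index X)
      = ∑ m, Fintype.card (∀ i, (cubes m i).Index X) := Fintype.card_sigma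
    _ ≤ ∑ _m : Fin 22, (2 * Fintype.card X) ^ 5 := sum_le_sum fun m _ =>
        (card_index_pi_le (cubes m)).trans
          (Nat.pow_le_pow_right (by have := Fintype.card_pos (α := X); omega)
            (card_cubes_ne_free_le m))
    _ = 22 * (2 * Fintype.card X) ^ 5 := by simp

end Bicliques


section Independence

variable {x y z : Fin 7 → X}

def HeadEq (x y : Fin 7 → X) : Prop := ∀ i : Fin 7, i < 4 → x i = y i

theorem HeadEq.symm (h : HeadEq x y) : HeadEq y x := fun i hi => (h i hi).symm

theorem HeadEq.trans (h : HeadEq x y) (h' : HeadEq y z) : HeadEq x z :=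
  fun i hi => (h i hi).trans (h' i hi)

variable [DecidableEq X] {s : Finset (Fin 7 → X)}

instance : DecidableRel (HeadEq (X := X)) := fun x y => by unfold HeadEq; infer_instance

theorem head_ne_or_headEq_of_not_adj (hxy : x ≠ y) (h : ¬ (graph X).Adj x y) :
    (∀ i : Fin 7, i < 4 → x i ≠ y i) ∧ (∃ j : Fin 7, 4 ≤ j ∧ x j = y j) ∨
      HeadEq x y ∧ ∀ j : Fin 7, 4 ≤ j → x j ≠ y j := by
  simp only [graph, not_not] at h
  rcases h with ⟨hhead, -, j, hj, htail⟩ | hzero | hsplit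
  · refine Or.inl ⟨fun i hi => ?_, j, hj, ?_⟩
    · simpa [pattern] using hhead i hi
    · simpa [pattern] using htail
  · exact absurd (funext fun i => by simpa [pattern] using hzero i) hxy
  · refine Or.inr ⟨fun i hi => ?_, fun j hj => ?_⟩
    · simpa [pattern, not_le.2 hi] using hsplit i
    · simpa [pattern, hj] using hsplit j

theorem tail_ne_of_headEq (hs : (graph X).IsIndepSet s) (hx : x ∈ s) (hy : y ∈ s) (hxy : x ≠ y)
    (h : HeadEq x y) : ∀ j : Fin 7, 4 ≤ j → x j ≠ y j := by
  rcases head_ne_or_headEq_of_not_adj hxy (hs hx hy hxy) with ⟨hne, -⟩ | ⟨-, htail⟩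
  · exact absurd (h 0 (by decide)) (hne 0 (by decide))
  · exact htail

theorem head_ne_of_not_headEq (hs : (graph X).IsIndepSet s) (hx : x ∈ s) (hy : y ∈ s)
    (h : ¬ HeadEq x y) : (∀ i : Fin 7, i < 4 → x i ≠ y i) ∧ ∃ j : Fin 7, 4 ≤ j ∧ x j = y j := by
  have hxy : x ≠ y := by rintro rfl; exact h fun _ _ => rfl
  rcases head_ne_or_headEq_of_not_adj hxy (hs hx hy hxy) with h' | ⟨h', -⟩
  · exact h'
  · exact absurd h' h

theorem headEq_of_apply_zero_eq (hs : (graph X).IsIndepSet s) (hx : x ∈ s) (hy : y ∈ s)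
    (h : x 0 = y 0) : HeadEq x y := by
  by_contra hxy
  exact (head_ne_of_not_headEq hs hx hy hxy).1 0 (by decide) h

/-- A vertex `z` outside the class meets each member of the class in one of the last three
coordinates, and no two members share a value there. -/
theorem card_filter_headEq_le_three (hs : (graph X).IsIndepSet s) (hz : z ∈ s)
    (hxz : ¬ HeadEq x z) : #(s.filter (HeadEq x)) ≤ 3 := by
  have hmeet : ∀ y ∈ s.filter (HeadEq x), ∃ j : Fin 7, 4 ≤ j ∧ y j = z j := fun y hy => by
    rw [mem_filter] at hy
    exact (head_ne_of_not_headEq hs hy.1 hz fun h => hxz (hy.2.trans h)).2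
  choose! g hg using hmeet
  have hinj : Set.InjOn g (s.filter (HeadEq x)) := by
    intro y hy y' hy' hgy
    obtain ⟨hys, hxy⟩ := mem_filter.1 (mem_coe.1 hy)
    obtain ⟨hys', hxy'⟩ := mem_filter.1 (mem_coe.1 hy')
    by_contra hne
    refine tail_ne_of_headEq hs hys hys' hne (hxy.symm.trans hxy') (g y) (hg y hy).1 ?_
    rw [(hg y hy).2, hgy, (hg y' hy').2]
  calc #(s.filter (HeadEq x)) ≤ #{j : Fin 7 | 4 ≤ j} :=
        card_le_card_of_injOn g (fun y hy => mem_filter.2 ⟨mem_univ _, (hg y hy).1⟩) hinj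
    _ = 3 := by decide

theorem card_le_of_isIndepSet [Fintype X] (hs : (graph X).IsIndepSet s) :
    #s ≤ 3 * Fintype.card X := by
  by_cases hone : ∀ x ∈ s, ∀ y ∈ s, HeadEq x y
  · have hinj : Set.InjOn (· 4) (s : Set (Fin 7 → X)) := fun x hx y hy h => by
      by_contra hxy
      exact tail_ne_of_headEq hs hx hy hxy (hone x hx y hy) 4 le_rfl h
    calc #s ≤ #(univ : Finset X) := card_le_card_of_injOn _ (fun _ _ => mem_univ _) hinj
      _ ≤ 3 * Fintype.card X := by rw [card_univ]; omega
  push Not at hone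
  obtain ⟨x, hx, z, hz, hxz⟩ := hone
  have hclass : ∀ y, #(s.filter (HeadEq y)) ≤ 3 := fun y => by
    by_cases hyx : HeadEq y x
    · exact card_filter_headEq_le_three hs hz fun h => hxz (hyx.symm.trans h)
    · exact card_filter_headEq_le_three hs hx hyx
  calc #s ≤ 3 * #(s.image (· 0)) := card_le_mul_card_image s 3 fun a ha => by
        obtain ⟨y, hy, rfl⟩ := mem_image.1 ha
        refine (card_le_card fun w hw => ?_).trans (hclass y)
        rw [mem_filter] at hw ⊢
        exact ⟨hw.1, headEq_of_apply_zero_eq hs hy hw.1 hw.2.symm⟩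
    _ ≤ 3 * Fintype.card X := Nat.mul_le_mul_left 3 (card_le_univ _)

theorem card_pow_six_le_of_colorable [Fintype X] [Nonempty X] {k : ℕ}
    (hk : (graph X).Colorable k) : Fintype.card X ^ 6 ≤ 3 * k := by
  have h := hk.card_le_mul fun s hs => card_le_of_isIndepSet hs
  rw [Fintype.card_fun, Fintype.card_fin] at h
  have hpos := Fintype.card_pos (α := X)
  refine Nat.le_of_mul_le_mul_right ?_ hpos
  calc Fintype.card X ^ 6 * Fintype.card X = Fintype.card X ^ 7 := by ring
    _ ≤ k * (3 * Fintype.card X) := h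
    _ = 3 * k * Fintype.card X := by ring

end Independence

theorem rpow_six_fifths_le {b A q : ℝ} (hb : 0 ≤ b) (hA : 1 ≤ A) (hq : 0 ≤ q)
    (h : b ≤ A * q ^ 5) : b ^ ((6 : ℝ) / 5) ≤ A ^ 2 * q ^ 6 := by
  have hA6 : A ^ ((6 : ℝ) / 5) ≤ A ^ 2 := by
    simpa using Real.rpow_le_rpow_of_exponent_le hA (by norm_num : (6 : ℝ) / 5 ≤ (2 : ℕ))
  calc b ^ ((6 : ℝ) / 5) ≤ (A * q ^ 5) ^ ((6 : ℝ) / 5) := Real.rpow_le_rpow hb h (by norm_num)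
    _ = A ^ ((6 : ℝ) / 5) * q ^ 6 := by
        rw [Real.mul_rpow (by positivity) (by positivity), ← Real.rpow_natCast q 5,
          ← Real.rpow_mul hq]
        norm_num
    _ ≤ A ^ 2 * q ^ 6 := by gcongr

end AlonSaksSeymour

open AlonSaksSeymour

/-- There exist a constant `c > 0` and an infinite family of graphs `G` (with `bp(G)`
arbitrarily large) such that `χ(G) ≥ c · bp(G)^{6/5}`, disproving the
Alon–Saks–Seymour conjecture. -/
theorem alon_saks_seymour_counterexample :
    ∃ c : ℝ, 0 < c ∧ ∀ N : ℕ,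
      ∃ (V : Type) (_ : Fintype V) (G : SimpleGraph V),
        N ≤ bp G ∧
        ∀ m : ℕ, G.Colorable m → c * (bp G : ℝ) ^ ((6 : ℝ) / 5) ≤ (m : ℝ) := by
  refine ⟨(3 * 704 ^ 2)⁻¹, by positivity, fun N => ?_⟩
  have : NeZero (3 ^ N) := ⟨by positivity⟩
  obtain ⟨k, hk, B, hB⟩ := exists_isBicliquePartition_graph (X := Fin (3 ^ N))
  have hχ : ∀ m, (graph (Fin (3 ^ N))).Colorable m → (3 ^ N) ^ 6 ≤ 3 * m := fun m hm => by
    simpa using card_pow_six_le_of_colorable hm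
  refine ⟨_, inferInstance, graph (Fin (3 ^ N)), ?_, fun m hm => ?_⟩
  · obtain ⟨B', hB'⟩ := exists_isBicliquePartition_bp hB
    have h := hχ _ hB'.colorable
    rw [← pow_mul, ← pow_succ', Nat.pow_le_pow_iff_right (by norm_num)] at h
    omega
  · have hbp : (bp (graph (Fin (3 ^ N))) : ℝ) ≤ 704 * ((3 : ℝ) ^ N) ^ 5 := by
      have h := hB.bp_le.trans hk
      rw [Fintype.card_fin] at h
      exact_mod_cast h.trans_eq (by ring)
    have hm' : ((3 : ℝ) ^ N) ^ 6 ≤ 3 * m := by exact_mod_cast hχ m hm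
    calc (3 * 704 ^ 2 : ℝ)⁻¹ * (bp (graph (Fin (3 ^ N))) : ℝ) ^ ((6 : ℝ) / 5)
        ≤ (3 * 704 ^ 2 : ℝ)⁻¹ * (704 ^ 2 * (3 * m)) := by
          gcongr
          exact (rpow_six_fifths_le (Nat.cast_nonneg _) (by norm_num) (by positivity) hbp).trans
            (by gcongr)
      _ = m := by field_simp
end

section
/- Let H_S be the intersection of s complete bipartite graphs B(U_1,W_1),...,B(U_s,W_s) on a common vertex set (two vertices adjacent in H_S iff they are adjacent in every B(U_j,W_j)). Then the edge set of H_S is a disjoint union of at most 2^{s-1} complete bipartite graphs. -/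
lemma crossAdj_symm {V : Type*} {U W : Set V} {u v : V} (h : crossAdj U W u v) :
    crossAdj U W v u := h.elim (fun ⟨a, b⟩ => Or.inr ⟨b, a⟩) (fun ⟨a, b⟩ => Or.inl ⟨b, a⟩)

lemma existsUnique_equiv {α β : Type*} (e : α ≃ β) (P : α → Prop) :
    (∃! a, P a) ↔ ∃! b, P (e.symm b) := by
  constructor
  · rintro ⟨a, ha, hu⟩
    exact ⟨e a, by simpa using ha, fun b hb => by rw [← e.apply_symm_apply b, hu _ hb]⟩
  · rintro ⟨b, hb, hu⟩
    refine ⟨e.symm b, hb, fun a ha => ?_⟩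
    rw [← hu (e a) (by simpa using ha)]; simp

/-- The intersection `H_S` of `s ≥ 1` complete bipartite graphs `B(Uⱼ, Wⱼ)` (two vertices
adjacent iff adjacent in every `B(Uⱼ, Wⱼ)`) is an edge-disjoint union of at most
`2^{s-1}` complete bipartite graphs. -/
theorem inter_bicliques_decomposes {V : Type*} (s : ℕ) (hs : 1 ≤ s)
    (B : Fin s → Set V × Set V) (hdisj : ∀ j, Disjoint (B j).1 (B j).2) :
    ∃ k ≤ 2 ^ (s - 1), ∃ C : Fin k → Set V × Set V,
      (∀ i, Disjoint (C i).1 (C i).2) ∧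
      (∀ u v : V, (∀ j, crossAdj (B j).1 (B j).2 u v) ↔
        ∃! i, crossAdj (C i).1 (C i).2 u v) := by
  classical
  obtain ⟨n, rfl⟩ : ∃ n, s = n + 1 := ⟨s - 1, by omega⟩
  set D : (Fin n → Bool) → Set V × Set V := fun z =>
    ({w | (∀ j : Fin n, w ∈ (if z j then (B j.castSucc).2 else (B j.castSucc).1)) ∧
        w ∈ (B (Fin.last n)).1},
     {w | (∀ j : Fin n, w ∈ (if z j then (B j.castSucc).1 else (B j.castSucc).2)) ∧
        w ∈ (B (Fin.last n)).2}) with hDdef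
  -- key forward lemma, for the case `u ∈ U_last`
  have key : ∀ u v : V, (∀ j, crossAdj (B j).1 (B j).2 u v) →
      u ∈ (B (Fin.last n)).1 → v ∈ (B (Fin.last n)).2 →
      ∃! z : Fin n → Bool, crossAdj (D z).1 (D z).2 u v := by
    intro u v h hu hv
    refine ⟨fun j => if u ∈ (B j.castSucc).1 then false else true, ?_, ?_⟩
    · refine Or.inl ⟨⟨fun j => ?_, hu⟩, ⟨fun j => ?_, hv⟩⟩
      · rcases h j.castSucc with ⟨hu', hv'⟩ | ⟨hu', hv'⟩
        · simp [if_pos hu', hu']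
        · have : u ∉ (B j.castSucc).1 := fun hc => Set.disjoint_left.mp (hdisj _) hc hu'
          simp [if_neg this, hu']
      · rcases h j.castSucc with ⟨hu', hv'⟩ | ⟨hu', hv'⟩
        · simp [if_pos hu', hv']
        · have : u ∉ (B j.castSucc).1 := fun hc => Set.disjoint_left.mp (hdisj _) hc hu'
          simp [if_neg this, hv']
    · intro z' hz'
      rcases hz' with ⟨⟨hu1, _⟩, _⟩ | ⟨⟨_, hul⟩, _⟩
      · funext j
        have := hu1 j
        cases hzj : z' j with
        | false =>
          rw [hzj] at this; simp only [if_neg Bool.false_ne_true] at this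
          simp [if_pos this]
        | true =>
          rw [hzj] at this; simp only [if_pos rfl] at this
          have hnot : u ∉ (B j.castSucc).1 := fun hc => Set.disjoint_left.mp (hdisj _) hc this
          simp [if_neg hnot]
      · exact absurd hul (fun hc => Set.disjoint_left.mp (hdisj _) hu hc)
  -- main equivalence with index type `Fin n → Bool`
  have main : ∀ u v : V, (∀ j, crossAdj (B j).1 (B j).2 u v) ↔
      ∃! z : Fin n → Bool, crossAdj (D z).1 (D z).2 u v := by
    intro u v
    constructor
    · intro h
      rcases h (Fin.last n) with ⟨hu, hv⟩ | ⟨hu, hv⟩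
      · exact key u v h hu hv
      · obtain ⟨z, hz, huniq⟩ := key v u (fun j => crossAdj_symm (h j)) hv hu
        exact ⟨z, crossAdj_symm hz, fun z' hz' => huniq z' (crossAdj_symm hz')⟩
    · rintro ⟨z, hz, -⟩ j
      induction j using Fin.lastCases with
      | last =>
        rcases hz with ⟨⟨_, hul⟩, ⟨_, hvl⟩⟩ | ⟨⟨_, hul⟩, ⟨_, hvl⟩⟩
        · exact Or.inl ⟨hul, hvl⟩
        · exact Or.inr ⟨hul, hvl⟩
      | cast i =>
        rcases hz with ⟨⟨hu1, _⟩, ⟨hv1, _⟩⟩ | ⟨⟨hu1, _⟩, ⟨hv1, _⟩⟩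
        · have h1 := hu1 i; have h2 := hv1 i
          cases hzi : z i with
          | false => rw [hzi] at h1 h2; simp only [if_neg Bool.false_ne_true] at h1 h2
                     exact Or.inl ⟨h1, h2⟩
          | true => rw [hzi] at h1 h2; simp only [if_pos rfl] at h1 h2
                    exact Or.inr ⟨h1, h2⟩
        · have h1 := hu1 i; have h2 := hv1 i
          cases hzi : z i with
          | false => rw [hzi] at h1 h2; simp only [if_neg Bool.false_ne_true] at h1 h2
                     exact Or.inr ⟨h1, h2⟩
          | true => rw [hzi] at h1 h2; simp only [if_pos rfl] at h1 h2
                    exact Or.inl ⟨h1, h2⟩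
  -- transport along an equivalence `(Fin n → Bool) ≃ Fin (2 ^ n)`
  let E : (Fin n → Bool) ≃ Fin (2 ^ n) :=
    (Equiv.arrowCongr (Equiv.refl (Fin n)) finTwoEquiv.symm).trans finFunctionFinEquiv
  refine ⟨2 ^ n, by simp, fun i => D (E.symm i), fun i => ?_, fun u v => ?_⟩
  · rw [Set.disjoint_left]
    rintro w ⟨_, h1⟩ ⟨_, h2⟩
    exact Set.disjoint_left.mp (hdisj (Fin.last n)) h1 h2
  · rw [main u v]
    exact existsUnique_equiv E _
end

section
/- If the edges of a graph G can be partitioned into m edge-disjoint complete bipartite subgraphs, then there exists a graph Γ on m vertices such that the nondeterministic 0-communication complexity of the clique vs. independent set problem on Γ satisfies N⁰(CL-IS_Γ) ≥ log₂ χ(G). -/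
/-- `s` is an independent set of the graph `G`. -/
def IsIndepSet' {V : Type*} (G : SimpleGraph V) (s : Set V) : Prop :=
  ∀ ⦃u⦄, u ∈ s → ∀ ⦃v⦄, v ∈ s → u ≠ v → ¬ G.Adj u v


/-- `R` is a covering of the 0-entries of the clique vs. independent set communication
matrix of `G` by (all-zero) monochromatic combinatorial rectangles: each rectangle
consists only of pairs `(C, I)` with `C ∩ I = ∅`, and every pair (clique, independent set)
with empty intersection belongs to some rectangle. -/
def IsCISZeroCover {V : Type*} [DecidableEq V] (G : SimpleGraph V) {k : ℕ}
    (R : Fin k → Set (Finset V) × Set (Finset V)) : Prop :=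
  (∀ i, ∀ C ∈ (R i).1, ∀ I ∈ (R i).2, C ∩ I = ∅) ∧
  (∀ C I : Finset V, G.IsClique ↑C → IsIndepSet' G ↑I → C ∩ I = ∅ →
      ∃ i, C ∈ (R i).1 ∧ I ∈ (R i).2)

/-- `C⁰(CL-IS_G)`: the minimum number of all-zero rectangles needed to cover the
0-entries of the clique vs. independent set communication matrix of `G`. -/
noncomputable def C0 {V : Type*} [DecidableEq V] (G : SimpleGraph V) : ℕ :=
  sInf {k | ∃ R : Fin k → Set (Finset V) × Set (Finset V), IsCISZeroCover G R}

/-- The nondeterministic communication complexity `N⁰(CL-IS_G) = ⌈log₂ C⁰(CL-IS_G)⌉`. -/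
noncomputable def N0 {V : Type*} [DecidableEq V] (G : SimpleGraph V) : ℕ :=
  Nat.clog 2 (C0 G)

/-!
Let `Γ` join two bicliques whose `W`-sides meet. A vertex `v` of `G` yields the clique
`{i | v ∈ W_i}` and the independent set `{i | v ∈ U_i}` of `Γ` (two bicliques whose `U`-sides
share `v` and whose `W`-sides share `v'` would both contain the edge `vv'`), and these are
disjoint. Colouring `v` by a rectangle of a 0-cover that contains its pair is proper, so
`χ(G) ≤ C⁰(CL-IS_Γ)`.
-/

namespace BicliquePartition

variable {V : Type*} {m : ℕ} (B : Fin m → Set V × Set V)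

def bicliqueGraph : SimpleGraph (Fin m) where
  Adj i i' := i ≠ i' ∧ ((B i).2 ∩ (B i').2).Nonempty
  symm := ⟨fun _ _ h => ⟨h.1.symm, Set.inter_comm (B _).2 _ ▸ h.2⟩⟩
  loopless := ⟨fun _ h => h.1 rfl⟩

open Classical in
noncomputable def rightIndices (v : V) : Finset (Fin m) := {i | v ∈ (B i).2}

open Classical in
noncomputable def leftIndices (v : V) : Finset (Fin m) := {i | v ∈ (B i).1}

variable {B}

@[simp]
theorem mem_rightIndices {v : V} {i : Fin m} : i ∈ rightIndices B v ↔ v ∈ (B i).2 := by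
  simp [rightIndices]

@[simp]
theorem mem_leftIndices {v : V} {i : Fin m} : i ∈ leftIndices B v ↔ v ∈ (B i).1 := by
  simp [leftIndices]

theorem isClique_rightIndices (v : V) : (bicliqueGraph B).IsClique ↑(rightIndices B v) :=
  fun _ hi _ hi' hne => ⟨hne, v, mem_rightIndices.1 hi, mem_rightIndices.1 hi'⟩

theorem isIndepSet'_leftIndices {G : SimpleGraph V} (hB : IsBicliquePartition G B) (v : V) :
    IsIndepSet' (bicliqueGraph B) ↑(leftIndices B v) := by
  rintro i hi i' hi' hne ⟨-, v', hv'i, hv'i'⟩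
  have hcross : crossAdj (B i).1 (B i).2 v v' := .inl ⟨mem_leftIndices.1 hi, hv'i⟩
  have hcross' : crossAdj (B i').1 (B i').2 v v' := .inl ⟨mem_leftIndices.1 hi', hv'i'⟩
  exact hne ((hB.2.2 v v' (hB.2.1 i v v' hcross)).unique hcross hcross')

theorem rightIndices_inter_leftIndices {G : SimpleGraph V} (hB : IsBicliquePartition G B)
    (v : V) : rightIndices B v ∩ leftIndices B v = ∅ := by
  refine Finset.eq_empty_of_forall_notMem fun i hi => ?_
  rw [Finset.mem_inter, mem_rightIndices, mem_leftIndices] at hi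
  exact (hB.1 i).ne_of_mem hi.2 hi.1 rfl

theorem colorable_of_isCISZeroCover {G : SimpleGraph V} (hB : IsBicliquePartition G B) {k : ℕ}
    {R : Fin k → Set (Finset (Fin m)) × Set (Finset (Fin m))}
    (hR : IsCISZeroCover (bicliqueGraph B) R) : G.Colorable k := by
  have hcover (v : V) : ∃ r, rightIndices B v ∈ (R r).1 ∧ leftIndices B v ∈ (R r).2 :=
    hR.2 _ _ (isClique_rightIndices v) (isIndepSet'_leftIndices hB v)
      (rightIndices_inter_leftIndices hB v)
  choose color hcolor using hcover
  -- `i` lies in Alice's set of `w` and Bob's set of `u`, so no rectangle holds both `u` and `w`.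
  have separated {u w : V} {i : Fin m} (hu : u ∈ (B i).1) (hw : w ∈ (B i).2) :
      color u ≠ color w := fun heq => by
    have hempty := hR.1 _ _ (heq ▸ hcolor w).1 _ (hcolor u).2
    exact Finset.notMem_empty i
      (hempty ▸ Finset.mem_inter.2 ⟨mem_rightIndices.2 hw, mem_leftIndices.2 hu⟩)
  refine ⟨SimpleGraph.Coloring.mk color fun {u w} hadj => ?_⟩
  obtain ⟨i, hcross, -⟩ := hB.2.2 u w hadj
  rcases hcross with ⟨hu, hw⟩ | ⟨hu, hw⟩
  · exact separated hu hw
  · exact (separated hw hu).symm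

end BicliquePartition

theorem exists_isCISZeroCover {V : Type*} [Fintype V] [DecidableEq V] (G : SimpleGraph V) :
    ∃ k, ∃ R : Fin k → Set (Finset V) × Set (Finset V), IsCISZeroCover G R := by
  -- a singleton rectangle `{C} × {I}` for every disjoint pair `(C, I)`, empty ones elsewhere
  let e := Fintype.equivFin (Finset V × Finset V)
  refine ⟨_, fun r => if (e.symm r).1 ∩ (e.symm r).2 = ∅ then
      ({(e.symm r).1}, {(e.symm r).2}) else (∅, ∅), ?_, ?_⟩
  · intro r C hC I hI
    dsimp only at hC hI
    split_ifs at hC hI with h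
    · rw [Set.mem_singleton_iff.1 hC, Set.mem_singleton_iff.1 hI, h]
    · exact absurd hC (Set.notMem_empty C)
  · intro C I _ _ hCI
    exact ⟨e (C, I), by simp [hCI]⟩

theorem exists_isCISZeroCover_C0 {V : Type*} [Fintype V] [DecidableEq V] (G : SimpleGraph V) :
    ∃ R : Fin (C0 G) → Set (Finset V) × Set (Finset V), IsCISZeroCover G R :=
  Nat.sInf_mem (exists_isCISZeroCover G)

theorem Real.logb_natCast_le_clog_of_le (b : ℕ) {a c : ℕ} (h : a ≤ c) :
    Real.logb b a ≤ Nat.clog b c :=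
  calc Real.logb b a ≤ ⌈Real.logb b a⌉₊ := Nat.le_ceil _
    _ = Nat.clog b a := by rw [Real.natCeil_logb_natCast]
    _ ≤ Nat.clog b c := by exact_mod_cast Nat.clog_mono_right b h

/-- If the edges of `G` can be partitioned into `m` complete bipartite graphs, then there
is a graph `Γ` on `m` vertices with `N⁰(CL-IS_Γ) ≥ log₂ χ(G)`. -/
theorem exists_graph_N0_ge_log_chromatic (n m : ℕ) (G : SimpleGraph (Fin n))
    (B : Fin m → Set (Fin n) × Set (Fin n)) (hB : IsBicliquePartition G B) :
    ∃ Γ : SimpleGraph (Fin m),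
      Real.logb 2 (G.chromaticNumber.toNat : ℝ) ≤ (N0 Γ : ℝ) := by
  refine ⟨BicliquePartition.bicliqueGraph B, ?_⟩
  obtain ⟨R, hR⟩ := exists_isCISZeroCover_C0 (BicliquePartition.bicliqueGraph B)
  have hχ : G.chromaticNumber.toNat ≤ C0 (BicliquePartition.bicliqueGraph B) :=
    ENat.toNat_le_of_le_natCast
      (BicliquePartition.colorable_of_isCISZeroCover hB hR).chromaticNumber_le
  exact_mod_cast Real.logb_natCast_le_clog_of_le 2 hχ
end
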